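/- arXiv:2003.02048 — 12 statements merged into one kernel-verified Lean document; each statement's English description precedes it below -/
import Mathlib

section
/- Let G be a connected finite graph, S ⊆ V(G), and ℓ ≥ 1. Then S is an ℓ-solid-resolving set of G if and only if for every vertex x ∈ V(G) and every nonempty set Y ⊆ V(G) with x ∉ Y and |Y| ≤ ℓ, there exists s ∈ S such that d(s,x) < d(s,Y). -/
open SimpleGraph

variable {V : Type*}

/-- Distance from a vertex to a set of vertices. -/
noncomputable def dSet (G : SimpleGraph V) (s : V) (X : Set V) : ℕ :=
  sInf ((G.dist s) '' X)

/-- `S` is an `ℓ`-solid-resolving set of `G`. -/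
def LSolid (G : SimpleGraph V) (S : Set V) (ℓ : ℕ) : Prop :=
  ∀ X Y : Set V, X.Nonempty → Y.Nonempty → X.ncard ≤ ℓ → X ≠ Y →
    ∃ s ∈ S, dSet G s X ≠ dSet G s Y

/-- `S` is an `{ℓ}`-resolving set of `G`. -/
def LResolving (G : SimpleGraph V) (S : Set V) (ℓ : ℕ) : Prop :=
  ∀ X Y : Set V, X.Nonempty → Y.Nonempty → X.ncard ≤ ℓ → Y.ncard ≤ ℓ → X ≠ Y →
    ∃ s ∈ S, dSet G s X ≠ dSet G s Y

/-- The `ℓ`-solid-metric dimension of `G`. -/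
noncomputable def solidDim (G : SimpleGraph V) (ℓ : ℕ) : ℕ :=
  sInf {k | ∃ S : Set V, LSolid G S ℓ ∧ S.ncard = k}

/-- The `{ℓ}`-metric dimension of `G`. -/
noncomputable def lDim (G : SimpleGraph V) (ℓ : ℕ) : ℕ :=
  sInf {k | ∃ S : Set V, LResolving G S ℓ ∧ S.ncard = k}


lemma dSet_le_of_mem (G : SimpleGraph V) (s : V) {X : Set V} {x : V} (hx : x ∈ X) :
    dSet G s X ≤ G.dist s x :=
  Nat.sInf_le ⟨x, hx, rfl⟩

lemma exists_dSet_eq (G : SimpleGraph V) (s : V) {X : Set V} (hX : X.Nonempty) :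
    ∃ x ∈ X, dSet G s X = G.dist s x := by
  have := Nat.sInf_mem (hX.image (G.dist s))
  obtain ⟨x, hx, hxe⟩ := this
  exact ⟨x, hx, hxe.symm⟩

theorem stmt_0 [Fintype V] (G : SimpleGraph V) (hG : G.Connected) (S : Set V)
    (ℓ : ℕ) (hℓ : 1 ≤ ℓ) :
    LSolid G S ℓ ↔
      ∀ x : V, ∀ Y : Set V, Y.Nonempty → x ∉ Y → Y.ncard ≤ ℓ →
        ∃ s ∈ S, G.dist s x < dSet G s Y := by
  constructor
  · intro h x Y hY hxY hYl
    obtain ⟨s, hs, hne⟩ := h Y (insert x Y) hY (Set.insert_nonempty x Y) hYl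
      (fun he => hxY (he ▸ Set.mem_insert x Y))
    refine ⟨s, hs, ?_⟩
    obtain ⟨z, hz, hze⟩ := exists_dSet_eq G s (Set.insert_nonempty x Y)
    rcases hz with rfl | hz
    · have h1 : dSet G s (insert z Y) ≤ dSet G s Y := by
        obtain ⟨y, hy, hye⟩ := exists_dSet_eq G s hY
        exact hye ▸ dSet_le_of_mem G s (Set.mem_insert_of_mem z hy)
      omega
    · have h1 : dSet G s Y ≤ dSet G s (insert x Y) :=
        hze ▸ dSet_le_of_mem G s hz
      have h2 : dSet G s (insert x Y) ≤ dSet G s Y := by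
        obtain ⟨y, hy, hye⟩ := exists_dSet_eq G s hY
        exact hye ▸ dSet_le_of_mem G s (Set.mem_insert_of_mem x hy)
      omega
  · intro h X Y hX hY hXl hne
    by_cases hcase : ∃ y ∈ Y, y ∉ X
    · obtain ⟨y, hyY, hyX⟩ := hcase
      obtain ⟨s, hs, hlt⟩ := h y X hX hyX hXl
      have : dSet G s Y ≤ G.dist s y := dSet_le_of_mem G s hyY
      exact ⟨s, hs, by omega⟩
    · push_neg at hcase
      obtain ⟨x, hxX, hxY⟩ : ∃ x ∈ X, x ∉ Y := by
        by_contra hc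
        push_neg at hc
        exact hne (le_antisymm hc hcase)
      have hYl' : Y.ncard ≤ ℓ := le_trans (Set.ncard_le_ncard hcase X.toFinite) hXl
      obtain ⟨s, hs, hlt⟩ := h x Y hY hxY hYl'
      have : dSet G s X ≤ G.dist s x := dSet_le_of_mem G s hxX
      exact ⟨s, hs, by omega⟩
end

section
/- Let G be a connected finite graph, S ⊆ V(G), and ℓ ≥ 2. If S is an {ℓ}-resolving set of G, then for every vertex x ∈ V(G) and every set Y ⊆ V(G) with x ∉ Y and |Y| ≤ ℓ−1, there exists s ∈ S such that d(s,x) < d(s,Y). -/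
open SimpleGraph

variable {V : Type*}

theorem stmt_1 [Fintype V] (G : SimpleGraph V) (hG : G.Connected) (S : Set V)
    (ℓ : ℕ) (hℓ : 2 ≤ ℓ) (hS : LResolving G S ℓ) :
    ∀ x : V, ∀ Y : Set V, Y.Nonempty → x ∉ Y → Y.ncard ≤ ℓ - 1 →
      ∃ s ∈ S, G.dist s x < dSet G s Y := by
  intro x Y hYne hxY hYcard
  have hfinY : Y.Finite := Y.toFinite
  have hXne : (insert x Y).Nonempty := Set.insert_nonempty _ _
  have hXcard : (insert x Y).ncard ≤ ℓ := by
    calc (insert x Y).ncard ≤ Y.ncard + 1 := Set.ncard_insert_le _ _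
      _ ≤ (ℓ - 1) + 1 := by omega
      _ ≤ ℓ := by omega
  have hne : insert x Y ≠ Y := by
    intro h
    exact hxY (h ▸ Set.mem_insert x Y)
  obtain ⟨s, hsS, hsne⟩ := hS (insert x Y) Y hXne hYne hXcard (by omega) hne
  refine ⟨s, hsS, ?_⟩
  -- dSet of insert ≤ dSet Y
  have hle : dSet G s (insert x Y) ≤ dSet G s Y := by
    apply le_csInf ((hYne.image _))
    intro b hb
    obtain ⟨y, hy, rfl⟩ := hb
    exact Nat.sInf_le ⟨y, Set.mem_insert_of_mem _ hy, rfl⟩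
  have hlt : dSet G s (insert x Y) < dSet G s Y := lt_of_le_of_ne hle hsne
  -- sInf is attained
  have hmem : dSet G s (insert x Y) ∈ (G.dist s) '' (insert x Y) :=
    Nat.sInf_mem (hXne.image _)
  obtain ⟨y, hy, hyd⟩ := hmem
  rcases hy with rfl | hy
  · rw [← hyd] at hlt; exact hlt
  · exfalso
    have : dSet G s Y ≤ G.dist s y := Nat.sInf_le ⟨y, hy, rfl⟩
    omega
end

section
/- Let G be a connected finite graph, S ⊆ V(G), and ℓ ≥ 1. If S is an {ℓ+1}-resolving set of G, then S is an ℓ-solid-resolving set of G. -/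
open SimpleGraph

variable {V : Type*}

theorem stmt_3 [Fintype V] (G : SimpleGraph V) (hG : G.Connected) (S : Set V)
    (ℓ : ℕ) (hℓ : 1 ≤ ℓ) (hS : LResolving G S (ℓ + 1)) : LSolid G S ℓ := by
  have hins : ∀ (s a : V) (X : Set V), X.Nonempty →
      dSet G s (insert a X) = min (G.dist s a) (dSet G s X) := by
    intro s a X hX
    simp only [dSet, Set.image_insert_eq]
    exact csInf_insert (OrderBot.bddBelow _) (hX.image _)
  have hle : ∀ (s x : V) (X : Set V), x ∈ X → dSet G s X ≤ G.dist s x := by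
    intro s x X hx
    exact Nat.sInf_le (Set.mem_image_of_mem _ hx)
  intro X Y hX hY hXcard hXY
  by_contra hcon
  push_neg at hcon
  by_cases hsub : Y ⊆ X
  · -- pick x ∈ X \ Y
    obtain ⟨x, hxX, hxY⟩ : ∃ x, x ∈ X ∧ x ∉ Y := by
      by_contra h
      push_neg at h
      exact hXY (Set.Subset.antisymm h hsub)
    obtain ⟨s, hsS, hsne⟩ := hS Y (insert x Y) hY ⟨x, Set.mem_insert _ _⟩
      (le_trans (Set.ncard_le_ncard hsub (Set.toFinite X)) (le_trans hXcard (Nat.le_succ ℓ)))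
      (le_trans (Set.ncard_insert_le x Y)
        (Nat.succ_le_succ (le_trans (Set.ncard_le_ncard hsub (Set.toFinite X)) hXcard)))
      (fun h => hxY (h ▸ Set.mem_insert x Y))
    apply hsne
    rw [hins s x Y hY]
    have h1 : dSet G s X = dSet G s Y := hcon s hsS
    have h2 : dSet G s Y ≤ G.dist s x := h1 ▸ hle s x X hxX
    omega
  · obtain ⟨y, hyY, hyX⟩ : ∃ y, y ∈ Y ∧ y ∉ X := by
      by_contra h
      push_neg at h
      exact hsub h
    obtain ⟨s, hsS, hsne⟩ := hS X (insert y X) hX ⟨y, Set.mem_insert _ _⟩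
      (le_trans hXcard (Nat.le_succ ℓ))
      (le_trans (Set.ncard_insert_le y X) (Nat.succ_le_succ hXcard))
      (fun h => hyX (h ▸ Set.mem_insert y X))
    apply hsne
    rw [hins s y X hX]
    have h1 : dSet G s X = dSet G s Y := hcon s hsS
    have h2 : dSet G s X ≤ G.dist s y := h1 ▸ hle s y Y hyY
    omega
end

section
/- Let G be a finite graph with n vertices and 1 ≤ ℓ ≤ n−1. Then every ℓ-solid-resolving set of G has at least ℓ+1 elements, i.e., β_ℓ^s(G) ≥ ℓ+1. -/
open SimpleGraph

variable {V : Type*}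

theorem stmt_6 [Fintype V] (G : SimpleGraph V) (ℓ : ℕ) (hℓ : 1 ≤ ℓ)
    (hn : ℓ ≤ Fintype.card V - 1) :
    ∀ S : Set V, LSolid G S ℓ → ℓ + 1 ≤ S.ncard := by
  intro S hS
  by_contra h
  push_neg at h
  have hSl : S.ncard ≤ ℓ := Nat.lt_succ_iff.mp h
  have hcard : ℓ + 1 ≤ Fintype.card V := by omega
  rcases S.eq_empty_or_nonempty with rfl | ⟨s0, hs0⟩
  · obtain ⟨a, b, hab⟩ := Fintype.exists_pair_of_one_lt_card (α := V) (by omega)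
    obtain ⟨s, hs, -⟩ := hS {a} {b} ⟨a, rfl⟩ ⟨b, rfl⟩
      (by simpa using hℓ) (by simpa using hab)
    exact hs
  · have hlt : S.ncard < Fintype.card V := by omega
    have hne : S ≠ Set.univ := by
      intro e
      rw [e, Set.ncard_univ, Nat.card_eq_fintype_card] at hlt
      omega
    obtain ⟨v, hv⟩ : ∃ v, v ∉ S := by
      by_contra hv
      push_neg at hv
      exact hne (Set.eq_univ_of_forall hv)
    obtain ⟨s, hs, hd⟩ := hS S (insert v S) ⟨s0, hs0⟩ ⟨v, Set.mem_insert _ _⟩ hSl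
      (fun e => hv (e ▸ Set.mem_insert v S))
    apply hd
    have h1 : dSet G s S = 0 :=
      Nat.eq_zero_of_le_zero (Nat.sInf_le ⟨s, hs, SimpleGraph.dist_self⟩)
    have h2 : dSet G s (insert v S) = 0 :=
      Nat.eq_zero_of_le_zero (Nat.sInf_le ⟨s, Set.mem_insert_of_mem _ hs, SimpleGraph.dist_self⟩)
    rw [h1, h2]
end

section
/- Let G be a connected finite graph with n vertices and let 2 ≤ ℓ ≤ n−1. Then β_ℓ^s(G) = ℓ+1 if and only if n = ℓ+1 or G is the star K_{1,ℓ+1}. -/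
open SimpleGraph

variable {V : Type*}

/-!
If `|S| ≤ ℓ` and `x ∉ S`, then `S` and `S ∪ {x}` are at distance `0` from every vertex of `S`,
so every `ℓ`-solid-resolving set has at least `ℓ + 1` vertices. The whole vertex set attains
this bound when `n = ℓ + 1`, and so do the leaves of the star `K_{1,ℓ+1}`: two sets that agree
on the leaves differ at the center, and a leaf outside both sees the center at distance `1`
and any other leaf at distance `2`.

Conversely, let `S` be solid-resolving with `|S| = ℓ + 1` and `x ∉ S`. Separating `x` from
`S ∖ {s}` can only be done by `s`, so `d(s, x) < d(s, t)` for all `t ≠ s` in `S`; in particular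
`S` is independent. If `y ≠ x` is another vertex outside `S`, separating `x` from
`{y} ∪ S ∖ {s, t}` shows that at most one vertex of `S` is not strictly closer to `x` than
to `y`, and symmetrically; this is impossible once `|S| ≥ 3`. Hence `x` is the only vertex
outside `S`, all of `S` hangs on `x`, and `G` is the star centered at `x`.
-/

section dSet

variable {G : SimpleGraph V} {X Y : Set V} {s : V}

lemma dSet_le_dist {x : V} (hx : x ∈ X) : dSet G s X ≤ G.dist s x :=
  Nat.sInf_le ⟨x, hx, rfl⟩

lemma exists_mem_dSet_eq_dist (hX : X.Nonempty) : ∃ x ∈ X, dSet G s X = G.dist s x := by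
  obtain ⟨x, hx, h⟩ := Nat.sInf_mem (hX.image (G.dist s))
  exact ⟨x, hx, h.symm⟩

lemma dSet_eq_zero_of_mem (hs : s ∈ X) : dSet G s X = 0 :=
  Nat.eq_zero_of_le_zero (dist_self (G := G) ▸ dSet_le_dist hs)

lemma dSet_insert (hX : X.Nonempty) (v : V) :
    dSet G s (insert v X) = min (G.dist s v) (dSet G s X) := by
  rw [dSet, dSet, Set.image_insert_eq, csInf_insert (OrderBot.bddBelow _) (hX.image _)]

lemma dSet_eq_zero_iff (hG : G.Preconnected) (hX : X.Nonempty) : dSet G s X = 0 ↔ s ∈ X := by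
  refine ⟨fun h => ?_, dSet_eq_zero_of_mem⟩
  obtain ⟨x, hx, hsx⟩ := exists_mem_dSet_eq_dist (G := G) (s := s) hX
  rwa [(hG s x).dist_eq_zero_iff.mp (hsx ▸ h)]

lemma mem_iff_mem_of_dSet_eq (hG : G.Preconnected) (hX : X.Nonempty) (hY : Y.Nonempty)
    (h : dSet G s X = dSet G s Y) : s ∈ X ↔ s ∈ Y := by
  rw [← dSet_eq_zero_iff hG hX, ← dSet_eq_zero_iff hG hY, h]

end dSet

section solidResolving

variable {G : SimpleGraph V} {S Y : Set V} {ℓ : ℕ}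

lemma lSolid_univ (hG : G.Preconnected) : LSolid G Set.univ ℓ := by
  intro X Y hX hY _ hXY
  by_contra! h
  exact hXY (Set.ext fun s => mem_iff_mem_of_dSet_eq hG hX hY (h s trivial))

lemma solidDim_le {S : Set V} (hS : LSolid G S ℓ) : solidDim G ℓ ≤ S.ncard :=
  Nat.sInf_le ⟨S, hS, rfl⟩

lemma solidDim_eq_of_lSolid {k : ℕ} (hlb : ∀ T, LSolid G T ℓ → k ≤ T.ncard)
    (hS : LSolid G S ℓ) (hSk : S.ncard = k) : solidDim G ℓ = k :=
  le_antisymm (hSk ▸ solidDim_le hS)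
    (le_csInf ⟨_, S, hS, rfl⟩ (by rintro _ ⟨T, hT, rfl⟩; exact hlb T hT))

lemma exists_lSolid_ncard_eq_solidDim (hG : G.Preconnected) (ℓ : ℕ) :
    ∃ S, LSolid G S ℓ ∧ S.ncard = solidDim G ℓ :=
  Nat.sInf_mem (s := {k | ∃ S : Set V, LSolid G S ℓ ∧ S.ncard = k})
    ⟨_, Set.univ, lSolid_univ hG, rfl⟩

namespace LSolid

lemma exists_dist_lt_dSet (hS : LSolid G S ℓ) (hY : Y.Nonempty) (hYℓ : Y.ncard ≤ ℓ) {v : V}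
    (hv : v ∉ Y) : ∃ s ∈ S, s ∉ Y ∧ G.dist s v < dSet G s Y := by
  obtain ⟨s, hs, hne⟩ := hS Y (insert v Y) hY (Y.insert_nonempty v) hYℓ
    (fun h => hv (h ▸ Y.mem_insert v))
  rw [dSet_insert hY] at hne
  have hlt : G.dist s v < dSet G s Y := by omega
  refine ⟨s, hs, fun hsY => ?_, hlt⟩
  rw [dSet_eq_zero_of_mem hsY] at hlt
  exact Nat.not_lt_zero _ hlt

lemma succ_le_ncard [Fintype V] (hS : LSolid G S ℓ) (hℓ : 1 ≤ ℓ)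
    (hn : ℓ + 1 ≤ Fintype.card V) : ℓ + 1 ≤ S.ncard := by
  by_cases hSu : S = Set.univ
  · rwa [hSu, Set.ncard_univ, Nat.card_eq_fintype_card]
  obtain ⟨x, hx⟩ := (Set.ne_univ_iff_exists_notMem S).mp hSu
  by_contra! hSℓ
  rcases S.eq_empty_or_nonempty with rfl | hSne
  · have : Nontrivial V := Fintype.one_lt_card_iff_nontrivial.mp (by omega)
    obtain ⟨y, hyx⟩ := exists_ne x
    obtain ⟨s, hs, -⟩ := hS.exists_dist_lt_dSet (Set.singleton_nonempty y)
      (by rwa [Set.ncard_singleton]) (v := x) hyx.symm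
    exact hs
  · obtain ⟨s, hs, hsS, -⟩ := hS.exists_dist_lt_dSet hSne (by omega) hx
    exact hsS hs

variable (hS : LSolid G S ℓ) (hSℓ : S.ncard = ℓ + 1)
include hS hSℓ

lemma dist_lt_dist_of_ncard_eq {v s t : V} (hv : v ∉ S) (hs : s ∈ S) (ht : t ∈ S)
    (hst : s ≠ t) : G.dist s v < G.dist s t := by
  have hY : (S \ {s}).ncard ≤ ℓ := by rw [Set.ncard_sdiff_singleton_of_mem hs]; omega
  obtain ⟨s', hs', hs'Y, hlt⟩ :=
    hS.exists_dist_lt_dSet (Y := S \ {s}) ⟨t, ht, hst.symm⟩ hY (fun h => hv h.1)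
  have hs's : s' = s := by simpa [hs'] using hs'Y
  rw [hs's] at hlt
  exact hlt.trans_le (dSet_le_dist (X := S \ {s}) ⟨ht, hst.symm⟩)

lemma not_adj_of_ncard_eq (hG : G.Preconnected) {v s t : V} (hv : v ∉ S) (hs : s ∈ S)
    (ht : t ∈ S) : ¬ G.Adj s t := fun hadj => by
  have hlt := hS.dist_lt_dist_of_ncard_eq hSℓ hv hs ht hadj.ne
  rw [dist_eq_one_iff_adj.mpr hadj, Nat.lt_one_iff, (hG s v).dist_eq_zero_iff] at hlt
  exact hv (hlt ▸ hs)

lemma subsingleton_not_dist_lt {x y : V} (hx : x ∉ S) (hxy : x ≠ y) :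
    {s ∈ S | ¬ G.dist s x < G.dist s y}.Subsingleton := by
  rintro s ⟨hs, hsxy⟩ t ⟨ht, htxy⟩
  by_contra hst
  have hY : (insert y (S \ {s, t})).ncard ≤ ℓ := by
    have hpair :=
      Set.ncard_le_ncard (Set.pair_subset hs ht) (Set.finite_of_ncard_ne_zero (by omega))
    have := Set.ncard_insert_le y (S \ {s, t})
    rw [Set.ncard_sdiff (Set.pair_subset hs ht)] at this
    rw [Set.ncard_pair hst] at this hpair
    omega
  obtain ⟨u, hu, huY, hlt⟩ := hS.exists_dist_lt_dSet (Set.insert_nonempty _ _) hY (v := x)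
    (by simp [hxy, hx])
  have hu' : u = s ∨ u = t := by
    simp only [Set.mem_insert_iff, Set.mem_sdiff, Set.mem_singleton_iff, not_or, not_and,
      not_not] at huY
    tauto
  have hxy_lt := hlt.trans_le (dSet_le_dist (Set.mem_insert y _))
  rcases hu' with rfl | rfl <;> contradiction

lemma compl_subsingleton (hℓ : 2 ≤ ℓ) : Sᶜ.Subsingleton := by
  intro x hx y hy
  by_contra hxy
  have hA := hS.subsingleton_not_dist_lt hSℓ hx hxy
  have hB := hS.subsingleton_not_dist_lt hSℓ hy (Ne.symm hxy)
  have hcover : S ⊆ {s ∈ S | ¬ G.dist s x < G.dist s y} ∪ {s ∈ S | ¬ G.dist s y < G.dist s x} := by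
    intro s hs
    by_cases h : G.dist s x < G.dist s y
    · exact Or.inr ⟨hs, h.asymm⟩
    · exact Or.inl ⟨hs, h⟩
  have hS_le := (Set.ncard_le_ncard hcover (hA.finite.union hB.finite)).trans
    (Set.ncard_union_le _ _)
  have hA_le := (Set.ncard_le_one hA.finite).mpr hA
  have hB_le := (Set.ncard_le_one hB.finite).mpr hB
  omega

lemma eq_starGraph (hG : G.Connected) (hℓ : 2 ≤ ℓ) {x : V} (hx : x ∉ S) : G = starGraph x := by
  have hmem : ∀ v, v ≠ x → v ∈ S := fun v hvx =>
    by_contra fun hv => hvx (hS.compl_subsingleton hSℓ hℓ hv hx)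
  have hindep {s t : V} (hs : s ∈ S) (ht : t ∈ S) : ¬ G.Adj s t :=
    hS.not_adj_of_ncard_eq hSℓ hG.preconnected hx hs ht
  have hadj_center : ∀ v, v ≠ x → G.Adj v x := by
    intro v hvx
    have : Nontrivial V := ⟨⟨v, x, hvx⟩⟩
    obtain ⟨w, hw⟩ := hG.preconnected.exists_adj_of_nontrivial v
    obtain rfl : w = x := by_contra fun hwx => hindep (hmem v hvx) (hmem w hwx) hw
    exact hw
  ext u v
  rw [starGraph_adj]
  refine ⟨fun huv => ⟨huv.ne, ?_⟩, ?_⟩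
  · by_contra! h
    exact hindep (hmem u h.1) (hmem v h.2) huv
  · rintro ⟨huv, hu | hv⟩
    · exact hu ▸ (hadj_center v (hu ▸ huv.symm)).symm
    · exact hv ▸ hadj_center u (hv ▸ huv)

lemma card_eq_of_ncard_eq [Fintype V] (hℓ : 2 ≤ ℓ) {x : V} (hx : x ∉ S) :
    Fintype.card V = ℓ + 2 := by
  have := Set.ncard_add_ncard_compl S
  rwa [(hS.compl_subsingleton hSℓ hℓ).eq_singleton_of_mem hx, Set.ncard_singleton, hSℓ,
    Nat.card_eq_fintype_card, eq_comm] at this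

end LSolid

end solidResolving

section starGraph

variable {c : V}

lemma dist_starGraph_of_ne {u v : V} (hu : u ≠ c) (hv : v ≠ c) (huv : u ≠ v) :
    (starGraph c).dist u v = 2 := by
  have hle := dist_le
    (Walk.cons (starGraph_center_adj' hu.symm) (starGraph_center_adj hv.symm).toWalk)
  have hlt := (connected_starGraph c).one_lt_dist_of_ne_of_not_adj huv (by simp [hu, hv])
  simp only [Walk.length_cons, Adj.toWalk, Walk.length_nil] at hle
  omega

lemma dSet_starGraph_eq_one_iff {t : V} {Z : Set V} (ht : t ≠ c) (hZ : Z.Nonempty)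
    (htZ : t ∉ Z) :
    dSet (starGraph c) t Z = 1 ↔ c ∈ Z := by
  by_cases hc : c ∈ Z
  · have h1 := (dSet_le_dist (G := starGraph c) (s := t) hc).trans_eq
      (dist_eq_one_iff_adj.mpr (starGraph_center_adj' ht.symm))
    have h0 := mt (dSet_eq_zero_iff (connected_starGraph c).preconnected hZ).mp htZ
    simp only [hc, iff_true]
    omega
  · obtain ⟨z, hz, hdz⟩ := exists_mem_dSet_eq_dist (G := starGraph c) (s := t) hZ
    rw [hdz, dist_starGraph_of_ne ht (fun h => hc (h ▸ hz)) (fun h => htZ (h ▸ hz))]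
    simp [hc]

lemma lSolid_starGraph_compl [Fintype V] {ℓ : ℕ} (hℓ : ℓ + 2 ≤ Fintype.card V) :
    LSolid (starGraph c) {c}ᶜ ℓ := by
  intro X Y hX hY hXℓ hXY
  by_contra! h
  have hleaf (s : V) (hs : s ≠ c) : s ∈ X ↔ s ∈ Y :=
    mem_iff_mem_of_dSet_eq (connected_starGraph c).preconnected hX hY (h s hs)
  obtain ⟨t, htc, htX⟩ : ∃ t ≠ c, t ∉ X := by
    by_contra! hsub
    have := Set.ncard_le_ncard (s := {c}ᶜ) hsub
    rw [Set.ncard_compl, Set.ncard_singleton, Nat.card_eq_fintype_card] at this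
    omega
  have htY : t ∉ Y := fun htY => htX ((hleaf t htc).mpr htY)
  have hcenter : c ∈ X ↔ c ∈ Y := by
    rw [← dSet_starGraph_eq_one_iff htc hX htX, ← dSet_starGraph_eq_one_iff htc hY htY, h t htc]
  refine hXY (Set.ext fun s => ?_)
  by_cases hs : s = c
  · exact hs ▸ hcenter
  · exact hleaf s hs

lemma completeBipartiteGraph_fin_one (m : ℕ) :
    completeBipartiteGraph (Fin 1) (Fin m) = starGraph (Sum.inl 0) := by
  ext u v
  rcases u with u | u <;> rcases v with v | v <;> simp [Fin.fin_one_eq_zero]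

lemma SimpleGraph.Iso.eq_starGraph {W : Type*} {G : SimpleGraph V} {c' : W}
    (f : G ≃g starGraph c') : G = starGraph (f.symm c') := by
  ext u v
  rw [← f.map_adj_iff, starGraph_adj, starGraph_adj, f.injective.ne_iff, f.eq_symm_apply,
    f.eq_symm_apply]

lemma nonempty_starGraph_iso {W : Type*} [Fintype V] [Fintype W]
    (h : Fintype.card V = Fintype.card W) (c : V) (c' : W) :
    Nonempty (starGraph c ≃g starGraph c') := by
  classical
  let e₀ := Fintype.equivOfCardEq h
  let e := e₀.trans (Equiv.swap (e₀ c) c')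
  have he : e c = c' := by simp [e]
  refine ⟨⟨e, fun {a b} => ?_⟩⟩
  simp only [starGraph_adj, ← he, ne_eq, EmbeddingLike.apply_eq_iff_eq]

end starGraph

theorem stmt_7 [Fintype V] (G : SimpleGraph V) (hG : G.Connected) (ℓ : ℕ)
    (hℓ : 2 ≤ ℓ) (hn : ℓ ≤ Fintype.card V - 1) :
    solidDim G ℓ = ℓ + 1 ↔
      Fintype.card V = ℓ + 1 ∨
        Nonempty (G ≃g completeBipartiteGraph (Fin 1) (Fin (ℓ + 1))) := by
  have hV : ℓ + 1 ≤ Fintype.card V := by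
    have := Fintype.card_pos_iff.mpr hG.nonempty
    omega
  have hlb (S : Set V) (hS : LSolid G S ℓ) : ℓ + 1 ≤ S.ncard := hS.succ_le_ncard (by omega) hV
  have hstar : Fintype.card (Fin 1 ⊕ Fin (ℓ + 1)) = ℓ + 2 := by
    simp only [Fintype.card_sum, Fintype.card_fin]
    omega
  rw [completeBipartiteGraph_fin_one]
  constructor
  · intro hdim
    obtain ⟨S, hS, hSd⟩ := exists_lSolid_ncard_eq_solidDim hG.preconnected ℓ
    have hSℓ : S.ncard = ℓ + 1 := hSd.trans hdim
    by_cases hSu : S = Set.univ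
    · rw [← hSℓ, hSu, Set.ncard_univ, Nat.card_eq_fintype_card]
      exact Or.inl rfl
    obtain ⟨x, hx⟩ := (Set.ne_univ_iff_exists_notMem S).mp hSu
    rw [hS.eq_starGraph hSℓ hG hℓ hx]
    exact Or.inr (nonempty_starGraph_iso ((hS.card_eq_of_ncard_eq hSℓ hℓ hx).trans hstar.symm) x _)
  · rintro (hcard | hiso)
    · exact solidDim_eq_of_lSolid hlb (lSolid_univ hG.preconnected)
        (by rw [Set.ncard_univ, Nat.card_eq_fintype_card, hcard])
    · obtain ⟨f⟩ := hiso
      have hcard : Fintype.card V = ℓ + 2 := (Fintype.card_congr f.toEquiv).trans hstar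
      rw [f.eq_starGraph] at hlb ⊢
      refine solidDim_eq_of_lSolid hlb (lSolid_starGraph_compl (by omega)) ?_
      rw [Set.ncard_compl, Set.ncard_singleton, Nat.card_eq_fintype_card]
      omega
end

section
/- Let G and H be nontrivial connected finite graphs and ℓ ≥ 1. If S is an ℓ-solid-resolving set of the Cartesian product G □ H, then the projection of S onto G is an ℓ-solid-resolving set of G. -/
open SimpleGraph

variable {V : Type*}

/-!
Fix a vertex `w` of `H` and lift sets `X ⊆ V(G)` to the layer `X × {w}`; this keeps cardinalities
and distinctness. From a vertex `(a, b)` the distance to `X × {w}` is `d_G(a, X) + d_H(b, w)`, so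
a vertex of `S` resolving the two layers has first coordinate resolving the original sets.
-/

section BoxProd

variable {α β : Type*} {G : SimpleGraph α} {H : SimpleGraph β}

lemma SimpleGraph.dist_boxProd_of_reachable {x y : α × β} (hx : G.Reachable x.1 y.1)
    (hy : H.Reachable x.2 y.2) :
    (G.boxProd H).dist x y = G.dist x.1 y.1 + H.dist x.2 y.2 := by
  rw [dist, edist_boxProd, ENat.toNat_add (edist_ne_top_iff_reachable.mpr hx)
    (edist_ne_top_iff_reachable.mpr hy)]
  rfl

lemma Nat.sInf_image_add_const {s : Set ℕ} (hs : s.Nonempty) (c : ℕ) :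
    sInf ((· + c) '' s) = sInf s + c :=
  (Monotone.map_csInf_of_continuousAt (continuous_add_const c).continuousAt
    (fun _ _ h => Nat.add_le_add_right h c) hs).symm

lemma dSet_boxProd_prod_singleton (hG : G.Preconnected) (hH : H.Preconnected) (a : α)
    (b w : β) {X : Set α} (hX : X.Nonempty) :
    dSet (G.boxProd H) (a, b) (X ×ˢ {w}) = dSet G a X + H.dist b w := by
  have hdist : (G.boxProd H).dist (a, b) ∘ (fun v => (v, w)) = (· + H.dist b w) ∘ G.dist a :=
    funext fun v => dist_boxProd_of_reachable (hG a v) (hH b w)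
  rw [dSet, dSet, Set.prod_singleton, Set.image_image, ← Function.comp_def, hdist,
    Set.image_comp, Nat.sInf_image_add_const (hX.image _)]

end BoxProd

theorem stmt_10_general {W : Type*} [Nontrivial W]
    (G : SimpleGraph V) (H : SimpleGraph W) (hG : G.Connected) (hH : H.Connected)
    (ℓ : ℕ) (S : Set (V × W))
    (hS : LSolid (G.boxProd H) S ℓ) :
    LSolid G (Prod.fst '' S) ℓ := by
  intro X Y hX hY hXcard hXY
  obtain ⟨w⟩ : Nonempty W := inferInstance
  have hlayer : X ×ˢ {w} ≠ Y ×ˢ {w} := fun h =>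
    hXY ((Set.prod_eq_prod_iff_of_nonempty (hX.prod (Set.singleton_nonempty w))).mp h).1
  obtain ⟨⟨a, b⟩, hab, hres⟩ := hS (X ×ˢ {w}) (Y ×ˢ {w}) (hX.prod (Set.singleton_nonempty w))
    (hY.prod (Set.singleton_nonempty w)) (by simpa [Set.ncard_prod] using hXcard) hlayer
  refine ⟨a, ⟨(a, b), hab, rfl⟩, fun h => hres ?_⟩
  rw [dSet_boxProd_prod_singleton hG.preconnected hH.preconnected a b w hX,
    dSet_boxProd_prod_singleton hG.preconnected hH.preconnected a b w hY, h]

theorem stmt_10 {W : Type*} [Fintype V] [Fintype W] [Nontrivial V] [Nontrivial W]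
    (G : SimpleGraph V) (H : SimpleGraph W) (hG : G.Connected) (hH : H.Connected)
    (ℓ : ℕ) (hℓ : 1 ≤ ℓ) (S : Set (V × W))
    (hS : LSolid (G.boxProd H) S ℓ) :
    LSolid G (Prod.fst '' S) ℓ :=
  stmt_10_general G H hG hH ℓ S hS
end

section
/- Let m,n ≥ 2 and let S be a {2}-resolving set of the rook's graph K_m □ K_n. Then every quadruple {(a,v),(a,u),(b,v),(b,u)}, with a ≠ b in V(K_m) and v ≠ u in V(K_n), contains at least one element of S. -/
open SimpleGraph

variable {V : Type*}

/-- The rook's graph K_m □ K_n. -/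
def rook (m n : ℕ) : SimpleGraph (Fin m × Fin n) :=
  (⊤ : SimpleGraph (Fin m)).boxProd (⊤ : SimpleGraph (Fin n))

lemma rook_adj {m n : ℕ} (x y : Fin m × Fin n) :
    (rook m n).Adj x y ↔ (x.1 ≠ y.1 ∧ x.2 = y.2) ∨ (x.2 ≠ y.2 ∧ x.1 = y.1) := by
  simp [rook, boxProd_adj, and_comm]

lemma rook_dist {m n : ℕ} (x y : Fin m × Fin n) :
    (rook m n).dist x y = if x = y then 0 else if x.1 = y.1 ∨ x.2 = y.2 then 1 else 2 := by
  split_ifs with h1 h2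
  · subst h1; exact SimpleGraph.dist_self
  · rw [dist_eq_one_iff_adj, rook_adj]
    rcases h2 with h2 | h2
    · right; exact ⟨fun hc => h1 (Prod.ext h2 hc), h2⟩
    · left; exact ⟨fun hc => h1 (Prod.ext hc h2), h2⟩
  · push_neg at h2
    have hadj1 : (rook m n).Adj x (x.1, y.2) := by
      rw [rook_adj]; right; exact ⟨h2.2, rfl⟩
    have hadj2 : (rook m n).Adj (x.1, y.2) y := by
      rw [rook_adj]; left; exact ⟨h2.1, rfl⟩
    have hle : (rook m n).dist x y ≤ 2 := by
      simpa using SimpleGraph.dist_le (Walk.cons hadj1 (Walk.cons hadj2 Walk.nil))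
    have hne0 : (rook m n).dist x y ≠ 0 := by
      intro h
      rcases dist_eq_zero_iff_eq_or_not_reachable.mp h with h | h
      · exact h1 h
      · exact h ⟨Walk.cons hadj1 (Walk.cons hadj2 Walk.nil)⟩
    have hne1 : (rook m n).dist x y ≠ 1 := by
      intro h
      rw [dist_eq_one_iff_adj, rook_adj] at h
      rcases h with ⟨_, h⟩ | ⟨_, h⟩ <;> [exact h2.2 h; exact h2.1 h]
    omega

lemma dSet_pair (G : SimpleGraph V) (s p q : V) :
    dSet G s {p, q} = min (G.dist s p) (G.dist s q) := by
  rw [dSet, Set.image_pair, csInf_pair]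

theorem stmt_13 {m n : ℕ} (hm : 2 ≤ m) (hn : 2 ≤ n)
    (S : Set (Fin m × Fin n)) (hS : LResolving (rook m n) S 2) :
    ∀ a b : Fin m, ∀ v u : Fin n, a ≠ b → v ≠ u →
      (a, v) ∈ S ∨ (a, u) ∈ S ∨ (b, v) ∈ S ∨ (b, u) ∈ S := by
  intro a b v u hab hvu
  by_contra hcon
  push_neg at hcon
  obtain ⟨h1, h2, h3, h4⟩ := hcon
  have hXY : ({((a, v) : Fin m × Fin n), (b, u)} : Set (Fin m × Fin n)) ≠ {(a, u), (b, v)} := by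
    intro h
    have : ((a, v) : Fin m × Fin n) ∈ ({(a, u), (b, v)} : Set (Fin m × Fin n)) := by
      rw [← h]; left; rfl
    rcases this with h | h <;> simp_all [Prod.ext_iff]
  obtain ⟨s, hsS, hsne⟩ := hS {(a, v), (b, u)} {(a, u), (b, v)}
    ⟨_, by left; rfl⟩ ⟨_, by left; rfl⟩
    (by rw [Set.ncard_pair (fun h => hab (congrArg Prod.fst h))])
    (by rw [Set.ncard_pair (fun h => hab (congrArg Prod.fst h))])
    hXY
  apply hsne
  rw [dSet_pair, dSet_pair, rook_dist, rook_dist, rook_dist, rook_dist]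
  have e1 : s ≠ (a, v) := fun h => h1 (h ▸ hsS)
  have e2 : s ≠ (a, u) := fun h => h2 (h ▸ hsS)
  have e3 : s ≠ (b, v) := fun h => h3 (h ▸ hsS)
  have e4 : s ≠ (b, u) := fun h => h4 (h ▸ hsS)
  by_cases p1 : s.1 = a <;> by_cases p2 : s.1 = b <;>
    by_cases q1 : s.2 = v <;> by_cases q2 : s.2 = u <;>
    simp_all <;> omega
end

section
/- Let m ≥ n ≥ 6 and S ⊆ V(K_m □ K_n). If every quadruple {(a,v),(a,u),(b,v),(b,u)} (a ≠ b, v ≠ u) contains at least one element of S, then at most one row and at most one column of K_m □ K_n contain at most two elements of S each; equivalently, all but at most one of the rows, and all but at most one of the columns, contain at least three elements of S. -/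
open SimpleGraph

variable {V : Type*}

open Finset

section RectangleCover

variable {α β : Type*} [Fintype β] [DecidableEq β] (P : α → β → Prop) [DecidableRel P]

/-- Two positions `v ≠ u` with neither `P a ·` nor `P b ·` would span a rectangle avoiding `P`,
so at most one position is left uncovered. -/
theorem card_le_card_filter_add_card_filter_add_one
    (hP : ∀ a b v u, a ≠ b → v ≠ u → P a v ∨ P a u ∨ P b v ∨ P b u)
    {a b : α} (hab : a ≠ b) :
    Fintype.card β ≤ #{v | P a v} + #{v | P b v} + 1 := by
  set T : Finset β := ({v | P a v} : Finset β) ∪ ({v | P b v} : Finset β)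
  have hTc : #Tᶜ ≤ 1 := by
    refine card_le_one.mpr fun v hv u hu => ?_
    by_contra hvu
    simp only [T, mem_compl, mem_union, mem_filter, mem_univ, true_and, not_or] at hv hu
    rcases hP a b v u hab hvu with h | h | h | h <;> tauto
  calc Fintype.card β = #T + #Tᶜ := (card_add_card_compl T).symm
    _ ≤ #{v | P a v} + #{v | P b v} + 1 := by grind [card_union_le]

theorem subsingleton_setOf_card_filter_le_two
    (hP : ∀ a b v u, a ≠ b → v ≠ u → P a v ∨ P a u ∨ P b v ∨ P b u)
    (hβ : 6 ≤ Fintype.card β) :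
    {a | #{v | P a v} ≤ 2}.Subsingleton := by
  intro a ha b hb
  by_contra hab
  have := card_le_card_filter_add_card_filter_add_one P hP hab
  simp only [Set.mem_ofPred_eq] at ha hb
  omega

end RectangleCover

theorem card_filter_fst_eq {α β : Type*} [DecidableEq α] [Fintype β] [DecidableEq β]
    (S : Finset (α × β)) (a : α) : #(S.filter (fun x => x.1 = a)) = #{v | (a, v) ∈ S} := by
  refine card_nbij' Prod.snd (a, ·) ?_ ?_ ?_ ?_ <;> intro x <;> aesop

theorem card_filter_snd_eq {α β : Type*} [Fintype α] [DecidableEq α] [DecidableEq β]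
    (S : Finset (α × β)) (u : β) : #(S.filter (fun x => x.2 = u)) = #{a | (a, u) ∈ S} := by
  refine card_nbij' Prod.fst (·, u) ?_ ?_ ?_ ?_ <;> intro x <;> aesop

theorem stmt_14 {m n : ℕ} (hmn : n ≤ m) (hn : 6 ≤ n)
    (S : Finset (Fin m × Fin n))
    (hquad : ∀ a b : Fin m, ∀ v u : Fin n, a ≠ b → v ≠ u →
      (a, v) ∈ S ∨ (a, u) ∈ S ∨ (b, v) ∈ S ∨ (b, u) ∈ S) :
    {a : Fin m | (S.filter (fun x => x.1 = a)).card ≤ 2}.Subsingleton ∧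
      {u : Fin n | (S.filter (fun x => x.2 = u)).card ≤ 2}.Subsingleton := by
  simp only [card_filter_fst_eq, card_filter_snd_eq]
  constructor
  · exact subsingleton_setOf_card_filter_le_two (fun a v => (a, v) ∈ S) hquad
      (by simpa using hn)
  · refine subsingleton_setOf_card_filter_le_two (fun u a => (a, u) ∈ S) ?_
      (by simpa using hn.trans hmn)
    intro v u a b hvu hab
    rcases hquad a b v u hab hvu with h | h | h | h <;> tauto
end

section
/- Let m ≥ n ≥ 6 and S ⊆ V(K_m □ K_n). If every row and every column contains at least two elements of S, and every quadruple {(a,v),(a,u),(b,v),(b,u)} (a ≠ b, v ≠ u) contains at least one element of S, then S is a {2}-resolving set of K_m □ K_n. -/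
set_option maxHeartbeats 1000000


open SimpleGraph

variable {V : Type*}

/- ---------------- Auxiliary lemmas ---------------- -/

private lemma rook_adj_iff {m n : ℕ} {x y : Fin m × Fin n} :
    (rook m n).Adj x y ↔ ((x.1 ≠ y.1 ∧ x.2 = y.2) ∨ (x.2 ≠ y.2 ∧ x.1 = y.1)) := by
  simp [rook, SimpleGraph.boxProd_adj]

private lemma rook_reachable {m n : ℕ} (x y : Fin m × Fin n) : (rook m n).Reachable x y := by
  by_cases h1 : x.1 = y.1
  · by_cases h2 : x.2 = y.2
    · have : x = y := Prod.ext_iff.mpr ⟨h1, h2⟩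
      rw [this]
    · exact (rook_adj_iff.mpr (Or.inr ⟨h2, h1⟩)).reachable
  · by_cases h2 : x.2 = y.2
    · exact (rook_adj_iff.mpr (Or.inl ⟨h1, h2⟩)).reachable
    · have ha : (rook m n).Adj x (y.1, x.2) := rook_adj_iff.mpr (Or.inl ⟨h1, rfl⟩)
      have hb : (rook m n).Adj (y.1, x.2) y := rook_adj_iff.mpr (Or.inr ⟨h2, rfl⟩)
      exact ha.reachable.trans hb.reachable

private lemma rook_dist_le_one {m n : ℕ} {x y : Fin m × Fin n} :
    (rook m n).dist x y ≤ 1 ↔ (x.1 = y.1 ∨ x.2 = y.2) := by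
  constructor
  · intro h
    rcases Nat.le_one_iff_eq_zero_or_eq_one.mp h with h0 | h1
    · have := ((rook_reachable x y).dist_eq_zero_iff).mp h0
      exact Or.inl (by rw [this])
    · have := (SimpleGraph.dist_eq_one_iff_adj).mp h1
      rcases rook_adj_iff.mp this with h' | h'
      · exact Or.inr h'.2
      · exact Or.inl h'.2
  · intro h
    by_cases hxy : x = y
    · rw [hxy]
      simp [SimpleGraph.dist_self]
    · have hadj : (rook m n).Adj x y := by
        apply rook_adj_iff.mpr
        rcases h with h | h
        · right
          refine ⟨fun h2 => hxy (Prod.ext_iff.mpr ⟨h, h2⟩), h⟩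
        · left
          refine ⟨fun h1 => hxy (Prod.ext_iff.mpr ⟨h1, h⟩), h⟩
      exact le_of_eq (SimpleGraph.dist_eq_one_iff_adj.mpr hadj)

private lemma dSet_mem {m n : ℕ} (s : Fin m × Fin n) {X : Set (Fin m × Fin n)} (hX : X.Nonempty) :
    ∃ x ∈ X, (rook m n).dist s x = dSet (rook m n) s X := by
  have h := Nat.sInf_mem (hX.image ((rook m n).dist s))
  obtain ⟨x, hx, hd⟩ := h
  exact ⟨x, hx, hd⟩

private lemma dSet_zero_iff {m n : ℕ} (s : Fin m × Fin n) {X : Set (Fin m × Fin n)}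
    (hX : X.Nonempty) : dSet (rook m n) s X = 0 ↔ s ∈ X := by
  constructor
  · intro h
    obtain ⟨x, hx, hd⟩ := dSet_mem s hX
    rw [h] at hd
    have := ((rook_reachable s x).dist_eq_zero_iff).mp hd
    rwa [this]
  · intro h
    have h1 : (rook m n).dist s s ∈ ((rook m n).dist s) '' X := ⟨s, h, rfl⟩
    have h2 := Nat.sInf_le h1
    rw [SimpleGraph.dist_self] at h2
    exact Nat.le_zero.mp h2

private lemma dSet_le_one_iff {m n : ℕ} (s : Fin m × Fin n) {X : Set (Fin m × Fin n)}
    (hX : X.Nonempty) :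
    dSet (rook m n) s X ≤ 1 ↔ ∃ x ∈ X, s.1 = x.1 ∨ s.2 = x.2 := by
  constructor
  · intro h
    obtain ⟨x, hx, hd⟩ := dSet_mem s hX
    refine ⟨x, hx, rook_dist_le_one.mp ?_⟩
    rw [hd]
    exact h
  · rintro ⟨x, hx, hc⟩
    have h1 : (rook m n).dist s x ∈ ((rook m n).dist s) '' X := ⟨x, hx, rfl⟩
    exact le_trans (Nat.sInf_le h1) (rook_dist_le_one.mpr hc)

private lemma memXY {m n : ℕ} {q1 q2 r1 r2 s : Fin m × Fin n}
    (h : dSet (rook m n) s {q1, q2} = dSet (rook m n) s {r1, r2})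
    (hs : s = q1 ∨ s = q2) : s = r1 ∨ s = r2 := by
  have hXne : ({q1, q2} : Set (Fin m × Fin n)).Nonempty := ⟨q1, by simp⟩
  have hYne : ({r1, r2} : Set (Fin m × Fin n)).Nonempty := ⟨r1, by simp⟩
  have h0 : dSet (rook m n) s {q1, q2} = 0 :=
    (dSet_zero_iff s hXne).mpr (by rcases hs with rfl | rfl <;> simp)
  have h1 := (dSet_zero_iff s hYne).mp (h.symm.trans h0)
  simpa using h1

private lemma nbrXY {m n : ℕ} {q1 q2 r1 r2 s : Fin m × Fin n}
    (h : dSet (rook m n) s {q1, q2} = dSet (rook m n) s {r1, r2})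
    (hs : ∃ x, (x = q1 ∨ x = q2) ∧ (s.1 = x.1 ∨ s.2 = x.2)) :
    ∃ y, (y = r1 ∨ y = r2) ∧ (s.1 = y.1 ∨ s.2 = y.2) := by
  have hXne : ({q1, q2} : Set (Fin m × Fin n)).Nonempty := ⟨q1, by simp⟩
  have hYne : ({r1, r2} : Set (Fin m × Fin n)).Nonempty := ⟨r1, by simp⟩
  have h1 : dSet (rook m n) s {q1, q2} ≤ 1 := by
    apply (dSet_le_one_iff s hXne).mpr
    obtain ⟨x, hx1, hx2⟩ := hs
    exact ⟨x, by simpa using hx1, hx2⟩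
  rw [h] at h1
  obtain ⟨y, hy1, hy2⟩ := (dSet_le_one_iff s hYne).mp h1
  exact ⟨y, by simpa using hy1, hy2⟩

private lemma pair_rep {α : Type*} [Finite α] {X : Set α} (hne : X.Nonempty)
    (hc : X.ncard ≤ 2) : ∃ p q, X = {p, q} := by
  obtain ⟨p, hp⟩ := hne
  by_cases h : ∀ x ∈ X, x = p
  · refine ⟨p, p, ?_⟩
    ext z
    simp only [Set.mem_insert_iff, Set.mem_singleton_iff, or_self]
    exact ⟨fun hz => h z hz, fun hz => hz ▸ hp⟩
  · push_neg at h
    obtain ⟨q, hq, hqp⟩ := h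
    refine ⟨p, q, ?_⟩
    ext z
    simp only [Set.mem_insert_iff, Set.mem_singleton_iff]
    constructor
    · intro hz
      by_contra hzc
      push_neg at hzc
      obtain ⟨hzp, hzq⟩ := hzc
      have hsub : ({z, q, p} : Set α) ⊆ X := by
        intro w hw
        simp only [Set.mem_insert_iff, Set.mem_singleton_iff] at hw
        rcases hw with rfl | rfl | rfl <;> assumption
      have h3 : ({z, q, p} : Set α).ncard = 3 := by
        rw [Set.ncard_insert_of_notMem (by simp [hzp, hzq]),
          Set.ncard_insert_of_notMem (by simp [hqp]), Set.ncard_singleton]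
      have h4 := Set.ncard_le_ncard hsub (Set.toFinite X)
      omega
    · rintro (rfl | rfl) <;> assumption

/-- Master lemma: if all distances agree and `p ∈ X \ Y`, then `Y` meets
both the column and the row of `p`. -/
private lemma master {m n : ℕ} (hmn : n ≤ m) (hn : 6 ≤ n)
    (S : Finset (Fin m × Fin n))
    (hcol : ∀ a : Fin m, 2 ≤ (S.filter (fun x => x.1 = a)).card)
    (hrow : ∀ u : Fin n, 2 ≤ (S.filter (fun x => x.2 = u)).card)
    (hquad : ∀ a b : Fin m, ∀ v u : Fin n, a ≠ b → v ≠ u →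
      (a, v) ∈ S ∨ (a, u) ∈ S ∨ (b, v) ∈ S ∨ (b, u) ∈ S)
    (q1 q2 r1 r2 p : Fin m × Fin n)
    (heq : ∀ s ∈ S, dSet (rook m n) s {q1, q2} = dSet (rook m n) s {r1, r2})
    (hpX : p = q1 ∨ p = q2) (hpY1 : p ≠ r1) (hpY2 : p ≠ r2) :
    (r1.1 = p.1 ∨ r2.1 = p.1) ∧ (r1.2 = p.2 ∨ r2.2 = p.2) := by
  have hpS : p ∉ S := by
    intro hs
    rcases memXY (heq p hs) hpX with h | h
    exacts [hpY1 h, hpY2 h]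
  have hps' : ∀ s ∈ S, s.1 = p.1 → s.2 = p.2 → False := by
    intro s hs h1 h2
    exact hpS (by rwa [show s = p from Prod.ext_iff.mpr ⟨h1, h2⟩] at hs)
  by_cases hA : r1.1 = p.1 ∨ r2.1 = p.1 <;> by_cases hB : r1.2 = p.2 ∨ r2.2 = p.2
  · exact ⟨hA, hB⟩
  · -- hA true, hB false : row of p has at most one element of S
    exfalso
    push_neg at hB
    obtain ⟨hB1, hB2⟩ := hB
    have rowv : ∀ s ∈ S, s.2 = p.2 → (s.1 = r1.1 ∨ s.1 = r2.1) := by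
      intro s hs h2
      obtain ⟨y, hyY, hy'⟩ := nbrXY (heq s hs) ⟨p, hpX, Or.inr h2⟩
      rcases hyY with rfl | rfl
      · rcases hy' with h' | h'
        · exact Or.inl h'
        · exact absurd (h'.symm.trans h2) hB1
      · rcases hy' with h' | h'
        · exact Or.inr h'
        · exact absurd (h'.symm.trans h2) hB2
    have hle : (S.filter (fun x => x.2 = p.2)).card ≤ 1 := by
      rw [Finset.card_le_one]
      intro s hs t ht
      rw [Finset.mem_filter] at hs ht
      rcases hA with hA | hA
      · have h1 : s.1 = r2.1 := by
          rcases rowv s hs.1 hs.2 with h | h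
          · exact absurd (hps' s hs.1 (h.trans hA) hs.2) not_false
          · exact h
        have h2 : t.1 = r2.1 := by
          rcases rowv t ht.1 ht.2 with h | h
          · exact absurd (hps' t ht.1 (h.trans hA) ht.2) not_false
          · exact h
        exact Prod.ext_iff.mpr ⟨h1.trans h2.symm, hs.2.trans ht.2.symm⟩
      · have h1 : s.1 = r1.1 := by
          rcases rowv s hs.1 hs.2 with h | h
          · exact h
          · exact absurd (hps' s hs.1 (h.trans hA) hs.2) not_false
        have h2 : t.1 = r1.1 := by
          rcases rowv t ht.1 ht.2 with h | h
          · exact h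
          · exact absurd (hps' t ht.1 (h.trans hA) ht.2) not_false
        exact Prod.ext_iff.mpr ⟨h1.trans h2.symm, hs.2.trans ht.2.symm⟩
    have := hrow p.2
    omega
  · -- hA false, hB true : column of p has at most one element of S
    exfalso
    push_neg at hA
    obtain ⟨hA1, hA2⟩ := hA
    have colc : ∀ s ∈ S, s.1 = p.1 → (s.2 = r1.2 ∨ s.2 = r2.2) := by
      intro s hs h1
      obtain ⟨y, hyY, hy'⟩ := nbrXY (heq s hs) ⟨p, hpX, Or.inl h1⟩
      rcases hyY with rfl | rfl
      · rcases hy' with h' | h'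
        · exact absurd (h'.symm.trans h1) hA1
        · exact Or.inl h'
      · rcases hy' with h' | h'
        · exact absurd (h'.symm.trans h1) hA2
        · exact Or.inr h'
    have hle : (S.filter (fun x => x.1 = p.1)).card ≤ 1 := by
      rw [Finset.card_le_one]
      intro s hs t ht
      rw [Finset.mem_filter] at hs ht
      rcases hB with hB | hB
      · have h1 : s.2 = r2.2 := by
          rcases colc s hs.1 hs.2 with h | h
          · exact absurd (hps' s hs.1 hs.2 (h.trans hB)) not_false
          · exact h
        have h2 : t.2 = r2.2 := by
          rcases colc t ht.1 ht.2 with h | h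
          · exact absurd (hps' t ht.1 ht.2 (h.trans hB)) not_false
          · exact h
        exact Prod.ext_iff.mpr ⟨hs.2.trans ht.2.symm, h1.trans h2.symm⟩
      · have h1 : s.2 = r1.2 := by
          rcases colc s hs.1 hs.2 with h | h
          · exact h
          · exact absurd (hps' s hs.1 hs.2 (h.trans hB)) not_false
        have h2 : t.2 = r1.2 := by
          rcases colc t ht.1 ht.2 with h | h
          · exact h
          · exact absurd (hps' t ht.1 ht.2 (h.trans hB)) not_false
        exact Prod.ext_iff.mpr ⟨hs.2.trans ht.2.symm, h1.trans h2.symm⟩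
    have := hcol p.1
    omega
  · -- both false : quadruple contradiction
    exfalso
    push_neg at hA hB
    obtain ⟨hA1, hA2⟩ := hA
    obtain ⟨hB1, hB2⟩ := hB
    have rowv : ∀ s ∈ S, s.2 = p.2 → (s.1 = r1.1 ∨ s.1 = r2.1) := by
      intro s hs h2
      obtain ⟨y, hyY, hy'⟩ := nbrXY (heq s hs) ⟨p, hpX, Or.inr h2⟩
      rcases hyY with rfl | rfl
      · rcases hy' with h' | h'
        · exact Or.inl h'
        · exact absurd (h'.symm.trans h2) hB1
      · rcases hy' with h' | h'
        · exact Or.inr h'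
        · exact absurd (h'.symm.trans h2) hB2
    have colc : ∀ s ∈ S, s.1 = p.1 → (s.2 = r1.2 ∨ s.2 = r2.2) := by
      intro s hs h1
      obtain ⟨y, hyY, hy'⟩ := nbrXY (heq s hs) ⟨p, hpX, Or.inl h1⟩
      rcases hyY with rfl | rfl
      · rcases hy' with h' | h'
        · exact absurd (h'.symm.trans h1) hA1
        · exact Or.inl h'
      · rcases hy' with h' | h'
        · exact absurd (h'.symm.trans h1) hA2
        · exact Or.inr h'
    -- two distinct elements of S in the column of p
    obtain ⟨s1, hs1, s2, hs2, hss⟩ :=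
      Finset.one_lt_card.mp (lt_of_lt_of_le one_lt_two (hcol p.1))
    rw [Finset.mem_filter] at hs1 hs2
    have hs1p : s1.2 ≠ p.2 := fun h => hps' s1 hs1.1 hs1.2 h
    have hs2p : s2.2 ≠ p.2 := fun h => hps' s2 hs2.1 hs2.2 h
    have h12 : s1.2 ≠ s2.2 := fun h => hss (Prod.ext_iff.mpr ⟨hs1.2.trans hs2.2.symm, h⟩)
    have hp2 : p.2 = q1.2 ∨ p.2 = q2.2 := by rcases hpX with rfl | rfl <;> simp
    have hwex : ∃ w : Fin n, (w = r1.2 ∨ w = r2.2) ∧ w ≠ p.2 ∧ w ≠ q1.2 ∧ w ≠ q2.2 := by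
      by_cases h1 : s1.2 ≠ q1.2 ∧ s1.2 ≠ q2.2
      · exact ⟨s1.2, colc s1 hs1.1 hs1.2, hs1p, h1.1, h1.2⟩
      · refine ⟨s2.2, colc s2 hs2.1 hs2.2, hs2p, ?_, ?_⟩
        · intro h
          rcases hp2 with hp | hp
          · exact hs2p (h.trans hp.symm)
          · apply h1
            constructor
            · intro h'
              exact h12 (h'.trans h.symm)
            · intro h'
              exact hs1p (h'.trans hp.symm)
        · intro h
          rcases hp2 with hp | hp
          · apply h1
            constructor
            · intro h'
              exact hs1p (h'.trans hp.symm)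
            · intro h'
              exact h12 (h'.trans h.symm)
          · exact hs2p (h.trans hp.symm)
    obtain ⟨w, hwr, hwp, hwq1, hwq2⟩ := hwex
    have roww : ∀ s ∈ S, s.2 = w → (s.1 = q1.1 ∨ s.1 = q2.1) := by
      intro s hs h2
      have hy : ∃ y, (y = r1 ∨ y = r2) ∧ (s.1 = y.1 ∨ s.2 = y.2) := by
        rcases hwr with h' | h'
        · exact ⟨r1, Or.inl rfl, Or.inr (h2.trans h')⟩
        · exact ⟨r2, Or.inr rfl, Or.inr (h2.trans h')⟩
      obtain ⟨x, hxX, hx'⟩ := nbrXY (heq s hs).symm hy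
      rcases hxX with rfl | rfl
      · rcases hx' with h' | h'
        · exact Or.inl h'
        · exact absurd (h2.symm.trans h') hwq1
      · rcases hx' with h' | h'
        · exact Or.inr h'
        · exact absurd (h2.symm.trans h') hwq2
    -- find two fresh columns
    have hTcard : ({q1.1, q2.1, r1.1, r2.1} : Finset (Fin m)).card ≤ 4 := by
      have t2 : ({r1.1, r2.1} : Finset (Fin m)).card ≤ 2 :=
        le_trans (Finset.card_insert_le _ _) (by simp)
      have t3 : ({q2.1, r1.1, r2.1} : Finset (Fin m)).card ≤ 3 := by
        have := Finset.card_insert_le q2.1 ({r1.1, r2.1} : Finset (Fin m))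
        omega
      have := Finset.card_insert_le q1.1 ({q2.1, r1.1, r2.1} : Finset (Fin m))
      omega
    have hsd : 1 < (Finset.univ \ ({q1.1, q2.1, r1.1, r2.1} : Finset (Fin m))).card := by
      rw [Finset.card_sdiff_of_subset (Finset.subset_univ _)]
      have huniv : (Finset.univ : Finset (Fin m)).card = m := by simp
      omega
    obtain ⟨c1, hc1, c2, hc2, hcc⟩ := Finset.one_lt_card.mp hsd
    rw [Finset.mem_sdiff] at hc1 hc2
    have hc1' := hc1.2
    have hc2' := hc2.2
    simp only [Finset.mem_insert, Finset.mem_singleton, not_or] at hc1' hc2'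
    rcases hquad c1 c2 p.2 w hcc (Ne.symm hwp) with h | h | h | h
    · rcases rowv _ h rfl with h' | h'
      · exact hc1'.2.2.1 h'
      · exact hc1'.2.2.2 h'
    · rcases roww _ h rfl with h' | h'
      · exact hc1'.1 h'
      · exact hc1'.2.1 h'
    · rcases rowv _ h rfl with h' | h'
      · exact hc2'.2.2.1 h'
      · exact hc2'.2.2.2 h'
    · rcases roww _ h rfl with h' | h'
      · exact hc2'.1 h'
      · exact hc2'.2.1 h'

private lemma final {m n : ℕ} (hmn : n ≤ m) (hn : 6 ≤ n)
    (S : Finset (Fin m × Fin n))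
    (hcol : ∀ a : Fin m, 2 ≤ (S.filter (fun x => x.1 = a)).card)
    (hrow : ∀ u : Fin n, 2 ≤ (S.filter (fun x => x.2 = u)).card)
    (hquad : ∀ a b : Fin m, ∀ v u : Fin n, a ≠ b → v ≠ u →
      (a, v) ∈ S ∨ (a, u) ∈ S ∨ (b, v) ∈ S ∨ (b, u) ∈ S)
    (q1 q2 r1 r2 p : Fin m × Fin n)
    (heq : ∀ s ∈ S, dSet (rook m n) s {q1, q2} = dSet (rook m n) s {r1, r2})
    (hpX : p = q1 ∨ p = q2) (hpY1 : p ≠ r1) (hpY2 : p ≠ r2) : False := by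
  have heq' : ∀ s ∈ S, dSet (rook m n) s {r1, r2} = dSet (rook m n) s {q1, q2} :=
    fun s hs => (heq s hs).symm
  have hpS : p ∉ S := by
    intro hs
    rcases memXY (heq p hs) hpX with h | h
    exacts [hpY1 h, hpY2 h]
  obtain ⟨hc, hr⟩ := master hmn hn S hcol hrow hquad q1 q2 r1 r2 p heq hpX hpY1 hpY2
  obtain ⟨y1, hy1Y, hy11⟩ : ∃ y, (y = r1 ∨ y = r2) ∧ y.1 = p.1 := by
    rcases hc with h | h
    exacts [⟨r1, Or.inl rfl, h⟩, ⟨r2, Or.inr rfl, h⟩]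
  obtain ⟨y2, hy2Y, hy22⟩ : ∃ y, (y = r1 ∨ y = r2) ∧ y.2 = p.2 := by
    rcases hr with h | h
    exacts [⟨r1, Or.inl rfl, h⟩, ⟨r2, Or.inr rfl, h⟩]
  have hy1p : y1 ≠ p := by
    rcases hy1Y with rfl | rfl
    exacts [Ne.symm hpY1, Ne.symm hpY2]
  have hy2p : y2 ≠ p := by
    rcases hy2Y with rfl | rfl
    exacts [Ne.symm hpY1, Ne.symm hpY2]
  have hy12 : y1.2 ≠ p.2 := fun h => hy1p (Prod.ext_iff.mpr ⟨hy11, h⟩)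
  have hy21 : y2.1 ≠ p.1 := fun h => hy2p (Prod.ext_iff.mpr ⟨h, hy22⟩)
  have hyy : y1 ≠ y2 := fun h => hy12 (by rw [h, hy22])
  have hYrep : ∀ z : Fin m × Fin n, (z = r1 ∨ z = r2) → (z = y1 ∨ z = y2) := by
    intro z hz
    rcases hy1Y with rfl | rfl <;> rcases hy2Y with rfl | rfl <;> tauto
  by_cases hy1X : y1 = q1 ∨ y1 = q2
  · -- X = {p, y1}
    have hXrep : ∀ z : Fin m × Fin n, (z = q1 ∨ z = q2) → (z = p ∨ z = y1) := by
      intro z hz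
      rcases hpX with rfl | rfl <;> rcases hy1X with rfl | rfl <;> tauto
    have hy2X1 : y2 ≠ q1 := by
      intro h
      rcases hXrep q1 (Or.inl rfl) with h' | h'
      · exact hy2p (h.trans h')
      · exact hyy ((h.trans h').symm)
    have hy2X2 : y2 ≠ q2 := by
      intro h
      rcases hXrep q2 (Or.inr rfl) with h' | h'
      · exact hy2p (h.trans h')
      · exact hyy ((h.trans h').symm)
    obtain ⟨hc2, -⟩ := master hmn hn S hcol hrow hquad r1 r2 q1 q2 y2 heq' hy2Y hy2X1 hy2X2
    apply hy21
    rcases hc2 with h | h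
    · rcases hXrep q1 (Or.inl rfl) with h' | h'
      · rw [← h, h']
      · rw [← h, h', hy11]
    · rcases hXrep q2 (Or.inr rfl) with h' | h'
      · rw [← h, h']
      · rw [← h, h', hy11]
  · have hy1X1 : y1 ≠ q1 := fun h => hy1X (Or.inl h)
    have hy1X2 : y1 ≠ q2 := fun h => hy1X (Or.inr h)
    have hy1S : y1 ∉ S := fun hs => hy1X (memXY (heq' y1 hs) hy1Y)
    obtain ⟨-, hr1⟩ := master hmn hn S hcol hrow hquad r1 r2 q1 q2 y1 heq' hy1Y hy1X1 hy1X2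
    obtain ⟨x, hxX, hx2⟩ : ∃ x, (x = q1 ∨ x = q2) ∧ x.2 = y1.2 := by
      rcases hr1 with h | h
      exacts [⟨q1, Or.inl rfl, h⟩, ⟨q2, Or.inr rfl, h⟩]
    have hxp : x ≠ p := fun h => hy12 (by rw [← hx2, h])
    by_cases hy2X : y2 = q1 ∨ y2 = q2
    · -- X = {p, y2} : contradiction since x ∈ X has row y1.2
      have hXrep : ∀ z : Fin m × Fin n, (z = q1 ∨ z = q2) → (z = p ∨ z = y2) := by
        intro z hz
        rcases hpX with rfl | rfl <;> rcases hy2X with rfl | rfl <;> tauto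
      rcases hXrep x hxX with h | h
      · exact hxp h
      · exact hy12 (by rw [← hx2, h, hy22])
    · have hy2X1 : y2 ≠ q1 := fun h => hy2X (Or.inl h)
      have hy2X2 : y2 ≠ q2 := fun h => hy2X (Or.inr h)
      have hy2S : y2 ∉ S := fun hs => hy2X (memXY (heq' y2 hs) hy2Y)
      obtain ⟨hc2, -⟩ := master hmn hn S hcol hrow hquad r1 r2 q1 q2 y2 heq' hy2Y hy2X1 hy2X2
      obtain ⟨x', hx'X, hx'1⟩ : ∃ x, (x = q1 ∨ x = q2) ∧ x.1 = y2.1 := by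
        rcases hc2 with h | h
        exacts [⟨q1, Or.inl rfl, h⟩, ⟨q2, Or.inr rfl, h⟩]
      have hx'p : x' ≠ p := fun h => hy21 (by rw [← hx'1, h])
      have hxx : x = x' := by
        rcases hpX with rfl | rfl <;> rcases hxX with rfl | rfl <;>
          rcases hx'X with rfl | rfl <;>
          first
            | rfl
            | exact absurd rfl hxp
            | exact absurd rfl hx'p
      have hxS : x ∉ S := by
        intro hs
        rcases hYrep x (memXY (heq x hs) hxX) with h | h
        · apply hy21
          rw [← hx'1, ← hxx, h, hy11]
        · apply hy12
          rw [← hx2, h, hy22]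
      have hmk1 : (p.1, y1.2) = y1 := by
        rw [← hy11]
      have hmk2 : (y2.1, p.2) = y2 := by
        rw [← hy22]
      have hmk3 : (y2.1, y1.2) = x := by
        rw [← hx'1, ← hxx, ← hx2]
      rcases hquad p.1 y2.1 p.2 y1.2 (Ne.symm hy21) (Ne.symm hy12) with h | h | h | h
      · exact hpS (by rwa [Prod.mk.eta] at h)
      · exact hy1S (by rwa [hmk1] at h)
      · exact hy2S (by rwa [hmk2] at h)
      · exact hxS (by rwa [hmk3] at h)

theorem stmt_15 {m n : ℕ} (hmn : n ≤ m) (hn : 6 ≤ n)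
    (S : Finset (Fin m × Fin n))
    (hcol : ∀ a : Fin m, 2 ≤ (S.filter (fun x => x.1 = a)).card)
    (hrow : ∀ u : Fin n, 2 ≤ (S.filter (fun x => x.2 = u)).card)
    (hquad : ∀ a b : Fin m, ∀ v u : Fin n, a ≠ b → v ≠ u →
      (a, v) ∈ S ∨ (a, u) ∈ S ∨ (b, v) ∈ S ∨ (b, u) ∈ S) :
    LResolving (rook m n) (↑S) 2 := by
  intro X Y hXne hYne hXc hYc hne
  by_contra hcon
  push_neg at hcon
  obtain ⟨q1, q2, hX⟩ := pair_rep hXne hXc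
  obtain ⟨r1, r2, hY⟩ := pair_rep hYne hYc
  subst hX hY
  have heq : ∀ s ∈ S, dSet (rook m n) s {q1, q2} = dSet (rook m n) s {r1, r2} :=
    fun s hs => hcon s (Finset.mem_coe.mpr hs)
  have heq' : ∀ s ∈ S, dSet (rook m n) s {r1, r2} = dSet (rook m n) s {q1, q2} :=
    fun s hs => (heq s hs).symm
  by_cases h1 : q1 = r1 ∨ q1 = r2
  · by_cases h2 : q2 = r1 ∨ q2 = r2
    · by_cases h3 : r1 = q1 ∨ r1 = q2
      · by_cases h4 : r2 = q1 ∨ r2 = q2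
        · apply hne
          ext z
          simp only [Set.mem_insert_iff, Set.mem_singleton_iff]
          constructor
          · rintro (rfl | rfl)
            exacts [h1, h2]
          · rintro (rfl | rfl)
            exacts [h3, h4]
        · exact final hmn hn S hcol hrow hquad r1 r2 q1 q2 r2 heq' (Or.inr rfl)
            (fun h => h4 (Or.inl h)) (fun h => h4 (Or.inr h))
      · exact final hmn hn S hcol hrow hquad r1 r2 q1 q2 r1 heq' (Or.inl rfl)
          (fun h => h3 (Or.inl h)) (fun h => h3 (Or.inr h))
    · exact final hmn hn S hcol hrow hquad q1 q2 r1 r2 q2 heq (Or.inr rfl)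
        (fun h => h2 (Or.inl h)) (fun h => h2 (Or.inr h))
  · exact final hmn hn S hcol hrow hquad q1 q2 r1 r2 q1 heq (Or.inl rfl)
      (fun h => h1 (Or.inl h)) (fun h => h1 (Or.inr h))
end

section
/- Let m ≥ n ≥ 2 and let S be a {2}-resolving set of K_m □ K_n. Write |S| = qm + r with integers q ≥ 0 and 0 ≤ r < m. Then r·C(n−(q+1),2) + (m−r)·C(n−q,2) ≤ C(n,2), where C(a,2) denotes the binomial coefficient 'a choose 2' (taken as 0 when a < 2). -/
open SimpleGraph

variable {V : Type*}

/- ### Auxiliary lemmas -/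

lemma rook_adj_s16 {m n : ℕ} {p q : Fin m × Fin n} :
    (rook m n).Adj p q ↔ (p.1 ≠ q.1 ∧ p.2 = q.2) ∨ (p.2 ≠ q.2 ∧ p.1 = q.1) := by
  simp [rook, SimpleGraph.boxProd_adj]

lemma rook_dist_eq {m n : ℕ} (x u : Fin m) (y v : Fin n) :
    (rook m n).dist (x, y) (u, v) =
      if x = u then (if y = v then 0 else 1) else (if y = v then 1 else 2) := by
  split_ifs with h1 h2 h3
  · subst h1; subst h2; exact SimpleGraph.dist_self
  · exact SimpleGraph.dist_eq_one_iff_adj.mpr (rook_adj_s16.mpr (Or.inr ⟨h2, h1⟩))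
  · exact SimpleGraph.dist_eq_one_iff_adj.mpr (rook_adj_s16.mpr (Or.inl ⟨h1, h3⟩))
  · have hadj1 : (rook m n).Adj (x, y) (u, y) := rook_adj_s16.mpr (Or.inl ⟨h1, rfl⟩)
    have hadj2 : (rook m n).Adj (u, y) (u, v) := rook_adj_s16.mpr (Or.inr ⟨h3, rfl⟩)
    have hle : (rook m n).dist (x, y) (u, v) ≤ 2 := by
      simpa using SimpleGraph.dist_le (Walk.cons hadj1 (Walk.cons hadj2 Walk.nil))
    have hne : ((x, y) : Fin m × Fin n) ≠ (u, v) := by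
      simp [Prod.ext_iff]; tauto
    have h0 : (rook m n).dist (x, y) (u, v) ≠ 0 := by
      intro h
      rcases SimpleGraph.dist_eq_zero_iff_eq_or_not_reachable.mp h with h' | h'
      · exact hne h'
      · exact h' ⟨Walk.cons hadj1 (Walk.cons hadj2 Walk.nil)⟩
    have hA : ¬ (rook m n).Adj (x, y) (u, v) := by
      intro hadj
      rcases rook_adj_s16.mp hadj with ⟨_, h⟩ | ⟨_, h⟩
      · exact h3 h
      · exact h1 h
    have h1' : (rook m n).dist (x, y) (u, v) ≠ 1 :=
      fun h => hA (SimpleGraph.dist_eq_one_iff_adj.mp h)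
    omega

/-- Every combinatorial rectangle meets a `{2}`-resolving set of the rook's graph. -/
lemma rect_meets {m n : ℕ} (S : Finset (Fin m × Fin n))
    (hS : LResolving (rook m n) (↑S) 2) {a b : Fin m} {c d : Fin n}
    (hab : a ≠ b) (hcd : c ≠ d) :
    (a, c) ∈ S ∨ (a, d) ∈ S ∨ (b, c) ∈ S ∨ (b, d) ∈ S := by
  by_contra h
  push_neg at h
  obtain ⟨h1, h2, h3, h4⟩ := h
  set X : Set (Fin m × Fin n) := {(a, c), (b, d)} with hX
  set Y : Set (Fin m × Fin n) := {(a, d), (b, c)} with hY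
  have hX2 : X.ncard ≤ 2 := by
    calc X.ncard ≤ ({(b, d)} : Set (Fin m × Fin n)).ncard + 1 := Set.ncard_insert_le _ _
    _ = 2 := by rw [Set.ncard_singleton]
  have hY2 : Y.ncard ≤ 2 := by
    calc Y.ncard ≤ ({(b, c)} : Set (Fin m × Fin n)).ncard + 1 := Set.ncard_insert_le _ _
    _ = 2 := by rw [Set.ncard_singleton]
  have hXY : X ≠ Y := by
    intro hEq
    have : ((a, c) : Fin m × Fin n) ∈ Y := hEq ▸ Set.mem_insert _ _
    simp only [hY, Set.mem_insert_iff, Set.mem_singleton_iff, Prod.ext_iff] at this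
    rcases this with ⟨_, h'⟩ | ⟨h', _⟩
    · exact hcd h'
    · exact hab h'
  obtain ⟨s, hsS, hne⟩ := hS X Y ⟨_, Set.mem_insert _ _⟩ ⟨_, Set.mem_insert _ _⟩ hX2 hY2 hXY
  apply hne
  obtain ⟨x, y⟩ := s
  have hsS' : (x, y) ∈ S := hsS
  have e1 : ¬(x = a ∧ y = c) := by rintro ⟨rfl, rfl⟩; exact h1 hsS'
  have e2 : ¬(x = a ∧ y = d) := by rintro ⟨rfl, rfl⟩; exact h2 hsS'
  have e3 : ¬(x = b ∧ y = c) := by rintro ⟨rfl, rfl⟩; exact h3 hsS'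
  have e4 : ¬(x = b ∧ y = d) := by rintro ⟨rfl, rfl⟩; exact h4 hsS'
  rw [hX, hY, dSet_pair, dSet_pair, rook_dist_eq, rook_dist_eq, rook_dist_eq, rook_dist_eq]
  by_cases hxa : x = a <;> by_cases hxb : x = b <;>
    by_cases hyc : y = c <;> by_cases hyd : y = d <;>
    simp_all

theorem stmt_16 {m n : ℕ} (hmn : n ≤ m) (hn : 2 ≤ n)
    (S : Finset (Fin m × Fin n)) (hS : LResolving (rook m n) (↑S) 2)
    (q r : ℕ) (hcard : S.card = q * m + r) (hr : r < m) :
    r * Nat.choose (n - (q + 1)) 2 + (m - r) * Nat.choose (n - q) 2 ≤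
      Nat.choose n 2 := by
  classical
  set f : ℕ → ℕ := fun t => (n - t).choose 2 with hf
  set cnt : Fin m → ℕ := fun i => (Finset.univ.filter (fun j => (i, j) ∈ S)).card with hcnt
  -- the row counts sum to |S|
  have hsum : ∑ i, cnt i = S.card := by
    rw [Finset.card_eq_sum_card_fiberwise (f := Prod.fst) (t := Finset.univ)
      (fun x _ => Finset.mem_univ _)]
    refine Finset.sum_congr rfl fun i _ => ?_
    show (Finset.univ.filter (fun j => (i, j) ∈ S)).card = _
    refine Finset.card_bij' (fun j _ => (i, j)) (fun p _ => p.2) ?_ ?_ ?_ ?_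
    · intro j hj
      simp only [Finset.mem_filter, Finset.mem_univ, true_and] at hj
      simp only [Finset.mem_filter]
      exact ⟨hj, by trivial⟩
    · intro p hp
      simp only [Finset.mem_filter, Finset.mem_univ, true_and] at hp ⊢
      obtain ⟨hp1, hp2⟩ := hp
      have : p = (i, p.2) := by rw [← hp2]
      rw [← this]; exact hp1
    · intro j hj; rfl
    · intro p hp
      simp only [Finset.mem_filter] at hp
      show (i, p.2) = p
      rw [← hp.2]
  -- combinatorial bound
  have hA : ∀ i, (Finset.univ.filter (fun j => (i, j) ∉ S)).card = n - cnt i := by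
    intro i
    have h := Finset.card_filter_add_card_filter_not
      (s := (Finset.univ : Finset (Fin n))) (p := fun j => (i, j) ∈ S)
    rw [Finset.card_univ, Fintype.card_fin] at h
    have hcc : (Finset.univ.filter (fun j => (i, j) ∈ S)).card = cnt i := rfl
    rw [hcc] at h
    have hle : cnt i ≤ n := by omega
    omega
  set P : Fin m → Finset (Finset (Fin n)) :=
    fun i => (Finset.univ.filter (fun j => (i, j) ∉ S)).powersetCard 2 with hP
  have hPcard : ∀ i, (P i).card = f (cnt i) := by
    intro i
    rw [hP]
    simp only
    rw [Finset.card_powersetCard, hA]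
  have hdisj : ∀ i ∈ (Finset.univ : Finset (Fin m)), ∀ i' ∈ Finset.univ, i ≠ i' →
      Disjoint (P i) (P i') := by
    intro i _ i' _ hii
    rw [Finset.disjoint_left]
    intro p hp hp'
    rw [hP] at hp hp'
    simp only [Finset.mem_powersetCard] at hp hp'
    obtain ⟨hp1, hp2⟩ := hp
    obtain ⟨hp1', _⟩ := hp'
    obtain ⟨c, d, hcd, rfl⟩ := Finset.card_eq_two.mp hp2
    have hic : (i, c) ∉ S := by
      have := hp1 (Finset.mem_insert_self c {d})
      simpa using this
    have hid : (i, d) ∉ S := by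
      have := hp1 (Finset.mem_insert_of_mem (Finset.mem_singleton_self d))
      simpa using this
    have hic' : (i', c) ∉ S := by
      have := hp1' (Finset.mem_insert_self c {d})
      simpa using this
    have hid' : (i', d) ∉ S := by
      have := hp1' (Finset.mem_insert_of_mem (Finset.mem_singleton_self d))
      simpa using this
    rcases rect_meets S hS hii hcd with h | h | h | h <;> tauto
  have hcomb : ∑ i, f (cnt i) ≤ n.choose 2 := by
    calc ∑ i, f (cnt i) = ∑ i, (P i).card := by
          refine Finset.sum_congr rfl fun i _ => (hPcard i).symm
      _ = (Finset.univ.biUnion P).card := (Finset.card_biUnion hdisj).symm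
      _ ≤ ((Finset.univ : Finset (Fin n)).powersetCard 2).card := by
          refine Finset.card_le_card ?_
          intro p hp
          rw [Finset.mem_biUnion] at hp
          obtain ⟨i, _, hp⟩ := hp
          rw [hP] at hp
          simp only [Finset.mem_powersetCard] at hp ⊢
          exact ⟨Finset.subset_univ _, hp.2⟩
      _ = n.choose 2 := by rw [Finset.card_powersetCard, Finset.card_univ, Fintype.card_fin]
  -- convexity: step identity
  have step : ∀ t, f t = f (t + 1) + (n - t - 1) := by
    intro t
    show (n - t).choose 2 = (n - (t + 1)).choose 2 + (n - t - 1)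
    rcases Nat.eq_zero_or_pos (n - t) with h | h
    · have h2 : n - (t + 1) = 0 := by omega
      simp [h, h2]
    · obtain ⟨j, hj⟩ : ∃ j, n - t = j + 1 := ⟨n - t - 1, by omega⟩
      have h2 : n - (t + 1) = j := by omega
      have h3 : n - t - 1 = j := by omega
      rw [h2, h3, hj, Nat.choose_succ_succ', Nat.choose_one_right]
      norm_num
      omega
  set D : ℕ := n - q - 1 with hD
  have A : ∀ k, f q ≤ f (q + k) + D * k := by
    intro k
    induction k with
    | zero => simp
    | succ k ih =>
      have h1 := step (q + k)
      have h2 : n - (q + k) - 1 ≤ D := by omega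
      have he : q + (k + 1) = (q + k) + 1 := by omega
      rw [he]
      calc f q ≤ f (q + k) + D * k := ih
        _ = (f ((q + k) + 1) + (n - (q + k) - 1)) + D * k := by rw [← h1]
        _ ≤ (f ((q + k) + 1) + D) + D * k := by
            exact Nat.add_le_add_right (Nat.add_le_add_left h2 _) _
        _ = f ((q + k) + 1) + D * (k + 1) := by ring
  have B : ∀ k, k ≤ q → f q + D * k ≤ f (q - k) := by
    intro k
    induction k with
    | zero => simp
    | succ k ih =>
      intro hk
      have ih' := ih (by omega)
      have h1 := step (q - (k + 1))
      have he : q - (k + 1) + 1 = q - k := by omega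
      rw [he] at h1
      have h2 : D ≤ n - (q - (k + 1)) - 1 := by omega
      calc f q + D * (k + 1) = (f q + D * k) + D := by ring
        _ ≤ f (q - k) + D := Nat.add_le_add_right ih' _
        _ ≤ f (q - k) + (n - (q - (k + 1)) - 1) := Nat.add_le_add_left h2 _
        _ = f (q - (k + 1)) := h1.symm
  have tangent : ∀ t : ℕ, (f q : ℤ) + (D : ℤ) * ((q : ℤ) - (t : ℤ)) ≤ (f t : ℤ) := by
    intro t
    rcases le_total q t with h | h
    · have hA' := A (t - q)
      rw [Nat.add_sub_cancel' h] at hA'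
      have : (f q : ℤ) ≤ (f t : ℤ) + (D : ℤ) * ((t : ℤ) - (q : ℤ)) := by
        have := (Nat.cast_le (α := ℤ)).mpr hA'
        push_cast at this
        rw [Nat.cast_sub h] at this
        linarith
      linarith
    · have hB' := B (q - t) (Nat.sub_le q t)
      rw [Nat.sub_sub_self h] at hB'
      have := (Nat.cast_le (α := ℤ)).mpr hB'
      push_cast at this
      rw [Nat.cast_sub h] at this
      linarith
  -- sum of tangent bounds
  have hsumZ : ∑ i : Fin m, (cnt i : ℤ) = (q : ℤ) * m + r := by
    have h := hsum.trans hcard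
    exact_mod_cast h
  have hsumtangent : (m : ℤ) * (f q : ℤ) - (D : ℤ) * r ≤ ∑ i : Fin m, (f (cnt i) : ℤ) := by
    have hle : ∑ i : Fin m, ((f q : ℤ) + (D : ℤ) * ((q : ℤ) - (cnt i : ℤ)))
        ≤ ∑ i : Fin m, (f (cnt i) : ℤ) :=
      Finset.sum_le_sum fun i _ => tangent (cnt i)
    have heq : ∑ i : Fin m, ((f q : ℤ) + (D : ℤ) * ((q : ℤ) - (cnt i : ℤ)))
        = (m : ℤ) * (f q : ℤ) + (D : ℤ) * ((m : ℤ) * q - ∑ i : Fin m, (cnt i : ℤ)) := by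
      rw [Finset.sum_add_distrib, Finset.sum_const, Finset.card_univ, Fintype.card_fin,
        ← Finset.mul_sum, Finset.sum_sub_distrib, Finset.sum_const, Finset.card_univ,
        Fintype.card_fin]
      push_cast
      ring
    rw [heq, hsumZ] at hle
    calc (m : ℤ) * (f q : ℤ) - (D : ℤ) * r
        = (m : ℤ) * (f q : ℤ) + (D : ℤ) * ((m : ℤ) * q - ((q : ℤ) * m + r)) := by ring
      _ ≤ _ := hle
  -- final assembly
  have hfq : (f q : ℤ) = (f (q + 1) : ℤ) + (D : ℤ) := by
    have := step q
    rw [hD]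
    exact_mod_cast this
  have hgoalZ : ((r * f (q + 1) + (m - r) * f q : ℕ) : ℤ) ≤ ((n.choose 2 : ℕ) : ℤ) := by
    have hrm : r ≤ m := le_of_lt hr
    push_cast [Nat.cast_sub hrm]
    have hcombZ : (∑ i : Fin m, (f (cnt i) : ℤ)) ≤ (n.choose 2 : ℤ) := by
      have := (Nat.cast_le (α := ℤ)).mpr hcomb
      push_cast at this
      convert this using 2
    have key : (r : ℤ) * (f (q + 1) : ℤ) + ((m : ℤ) - r) * (f q : ℤ)
        = (m : ℤ) * (f q : ℤ) - (D : ℤ) * r := by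
      rw [hfq]; ring
    calc (r : ℤ) * (f (q + 1) : ℤ) + ((m : ℤ) - r) * (f q : ℤ)
        = (m : ℤ) * (f q : ℤ) - (D : ℤ) * r := key
      _ ≤ ∑ i : Fin m, (f (cnt i) : ℤ) := hsumtangent
      _ ≤ (n.choose 2 : ℤ) := hcombZ
  exact_mod_cast hgoalZ
end

section
/- Let n = 2k+1 ≥ 5 be odd and J_n the flower snark. Fix i ∈ {1,…,n} and let B = {b_{i−1}, b_{i+1}} (indices mod n), X = B ∪ {a_i}, Y = B ∪ {c_i}, Z = B ∪ {d_i}. Then for a vertex s of J_n: d(s,X) ≠ d(s,B) iff s ∈ {a_i, b_i}; d(s,Y) ≠ d(s,B) iff s ∈ {c_i, b_i}; and d(s,Z) ≠ d(s,B) iff s ∈ {d_i, b_i}, where d(s,W) = min_{w∈W} d(s,w). -/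
open SimpleGraph

variable {V : Type*}

/-- The generating relation for the flower snark: vertices are pairs
(t, i) with t : Fin 4 (0 ↦ a, 1 ↦ b, 2 ↦ c, 3 ↦ d) and i : ZMod n. -/
def FlowerRel (n : ℕ) (x y : Fin 4 × ZMod n) : Prop :=
  (x.1 = 1 ∧ (y.1 = 0 ∨ y.1 = 2 ∨ y.1 = 3) ∧ x.2 = y.2) ∨
  (x.1 = 0 ∧ y.1 = 0 ∧ y.2 = x.2 + 1) ∨
  (x.1 = 2 ∧ y.1 = 2 ∧ x.2 ≠ -1 ∧ y.2 = x.2 + 1) ∨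
  (x.1 = 3 ∧ y.1 = 3 ∧ x.2 ≠ -1 ∧ y.2 = x.2 + 1) ∨
  (x.1 = 2 ∧ y.1 = 3 ∧ x.2 = -1 ∧ y.2 = 0) ∨
  (x.1 = 3 ∧ y.1 = 2 ∧ x.2 = -1 ∧ y.2 = 0)

/-- The flower snark J_n. -/
def flowerSnark (n : ℕ) : SimpleGraph (Fin 4 × ZMod n) :=
  SimpleGraph.fromRel (FlowerRel n)

namespace FSaux
variable {n : ℕ}

lemma fs_adj {x y : Fin 4 × ZMod n} :
    (flowerSnark n).Adj x y ↔ x ≠ y ∧ (FlowerRel n x y ∨ FlowerRel n y x) :=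
  Iff.rfl

lemma adj_b (t : Fin 4) (ht : t = 0 ∨ t = 2 ∨ t = 3) (j : ZMod n) :
    (flowerSnark n).Adj (1, j) (t, j) := by
  rw [fs_adj]
  constructor
  · intro h; rcases ht with rfl|rfl|rfl <;> simp at h
  · left; left; exact ⟨rfl, ht, rfl⟩

lemma zmod_one_ne_zero (hn5 : 5 ≤ n) : (1 : ZMod n) ≠ 0 := by
  haveI : Fact (1 < n) := ⟨by omega⟩
  exact one_ne_zero

lemma adj_aa (hn5 : 5 ≤ n) (j : ZMod n) :
    (flowerSnark n).Adj (0, j) (0, j + 1) := by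
  rw [fs_adj]
  refine ⟨?_, Or.inl (Or.inr (Or.inl ⟨rfl, rfl, rfl⟩))⟩
  intro h
  have h2 : j = j + 1 := congrArg Prod.snd h
  exact zmod_one_ne_zero hn5 (by linear_combination -h2)

lemma not_adj_bb (x y : ZMod n) : ¬ (flowerSnark n).Adj (1, x) (1, y) := by
  rw [fs_adj]
  rintro ⟨-, h | h⟩ <;> unfold FlowerRel at h <;> dsimp only at h <;>
    rcases h with ⟨h1,h2,h3⟩|⟨h1,h2,h3⟩|⟨h1,h2,h3,h4⟩|⟨h1,h2,h3,h4⟩|⟨h1,h2,h3,h4⟩|⟨h1,h2,h3,h4⟩ <;>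
    first
      | exact absurd h1 (by decide)
      | (rcases h2 with h2|h2|h2 <;> exact absurd h2 (by decide))

lemma nb (t : Fin 4) (ht : t ≠ 1) (i : ZMod n) (u : Fin 4 × ZMod n)
    (h : (flowerSnark n).Adj u (t, i)) :
    u = (1, i) ∨ (flowerSnark n).Adj u (1, i - 1) ∨ (flowerSnark n).Adj u (1, i + 1) := by
  obtain ⟨t', j⟩ := u
  rw [fs_adj] at h
  obtain ⟨hne, h | h⟩ := h <;> unfold FlowerRel at h <;> dsimp only at h
  · rcases h with ⟨h1,h2,h3⟩|⟨h1,h2,h3⟩|⟨h1,h2,h3,h4⟩|⟨h1,h2,h3,h4⟩|⟨h1,h2,h3,h4⟩|⟨h1,h2,h3,h4⟩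
    · subst h1 h3; exact Or.inl rfl
    · subst h1; right; left
      have hj : i - 1 = j := by rw [h3]; ring
      rw [hj]; exact (adj_b 0 (by simp) j).symm
    · subst h1; right; left
      have hj : i - 1 = j := by rw [h4]; ring
      rw [hj]; exact (adj_b 2 (by simp) j).symm
    · subst h1; right; left
      have hj : i - 1 = j := by rw [h4]; ring
      rw [hj]; exact (adj_b 3 (by simp) j).symm
    · subst h1; right; left
      have hj : i - 1 = j := by rw [h4, h3]; ring
      rw [hj]; exact (adj_b 2 (by simp) j).symm
    · subst h1; right; left
      have hj : i - 1 = j := by rw [h4, h3]; ring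
      rw [hj]; exact (adj_b 3 (by simp) j).symm
  · rcases h with ⟨h1,h2,h3⟩|⟨h1,h2,h3⟩|⟨h1,h2,h3,h4⟩|⟨h1,h2,h3,h4⟩|⟨h1,h2,h3,h4⟩|⟨h1,h2,h3,h4⟩
    · exact absurd h1 ht
    · subst h2; right; right
      have hj : i + 1 = j := h3.symm
      rw [hj]; exact (adj_b 0 (by simp) j).symm
    · subst h2; right; right
      have hj : i + 1 = j := h4.symm
      rw [hj]; exact (adj_b 2 (by simp) j).symm
    · subst h2; right; right
      have hj : i + 1 = j := h4.symm
      rw [hj]; exact (adj_b 3 (by simp) j).symm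
    · subst h2; right; right
      have hj : i + 1 = j := by rw [h4, h3]; ring
      rw [hj]; exact (adj_b 3 (by simp) j).symm
    · subst h2; right; right
      have hj : i + 1 = j := by rw [h4, h3]; ring
      rw [hj]; exact (adj_b 2 (by simp) j).symm

lemma nb_b (i : ZMod n) (u : Fin 4 × ZMod n) (h : (flowerSnark n).Adj u (1, i)) :
    ∃ t' : Fin 4, (t' = 0 ∨ t' = 2 ∨ t' = 3) ∧ u = (t', i) := by
  obtain ⟨t', j⟩ := u
  refine ⟨t', ?_⟩
  rw [fs_adj] at h
  obtain ⟨hne, h | h⟩ := h <;> unfold FlowerRel at h <;> dsimp only at h <;>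
    rcases h with ⟨h1,h2,h3⟩|⟨h1,h2,h3⟩|⟨h1,h2,h3,h4⟩|⟨h1,h2,h3,h4⟩|⟨h1,h2,h3,h4⟩|⟨h1,h2,h3,h4⟩
  · rcases h2 with h2|h2|h2 <;> exact absurd h2 (by decide)
  · exact absurd h2 (by decide)
  · exact absurd h2 (by decide)
  · exact absurd h2 (by decide)
  · exact absurd h2 (by decide)
  · exact absurd h2 (by decide)
  · subst h3; exact ⟨h2, rfl⟩
  · exact absurd h1 (by decide)
  · exact absurd h1 (by decide)
  · exact absurd h1 (by decide)
  · exact absurd h1 (by decide)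
  · exact absurd h1 (by decide)

lemma nb2 (t : Fin 4) (ht : t = 0 ∨ t = 2 ∨ t = 3) (i : ZMod n) (hn5 : 5 ≤ n) :
    ∃ w, (flowerSnark n).Adj (t, i) w ∧ (flowerSnark n).Adj w (1, i + 1) := by
  rcases ht with rfl | rfl | rfl
  · exact ⟨(0, i + 1), adj_aa hn5 i, (adj_b 0 (by simp) _).symm⟩
  · by_cases hi : i = -1
    · refine ⟨(3, i + 1), ?_, (adj_b 3 (by simp) _).symm⟩
      rw [fs_adj]
      refine ⟨by simp, Or.inl ?_⟩
      right; right; right; right; left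
      exact ⟨rfl, rfl, hi, by rw [hi]; ring⟩
    · refine ⟨(2, i + 1), ?_, (adj_b 2 (by simp) _).symm⟩
      rw [fs_adj]
      refine ⟨?_, Or.inl (Or.inr (Or.inr (Or.inl ⟨rfl, rfl, hi, rfl⟩)))⟩
      intro hcon
      have h2 : i = i + 1 := congrArg Prod.snd hcon
      exact zmod_one_ne_zero hn5 (by linear_combination -h2)
  · by_cases hi : i = -1
    · refine ⟨(2, i + 1), ?_, (adj_b 2 (by simp) _).symm⟩
      rw [fs_adj]
      refine ⟨by simp, Or.inl ?_⟩
      right; right; right; right; right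
      exact ⟨rfl, rfl, hi, by rw [hi]; ring⟩
    · refine ⟨(3, i + 1), ?_, (adj_b 3 (by simp) _).symm⟩
      rw [fs_adj]
      refine ⟨?_, Or.inl (Or.inr (Or.inr (Or.inr (Or.inl ⟨rfl, rfl, hi, rfl⟩))))⟩
      intro hcon
      have h2 : i = i + 1 := congrArg Prod.snd hcon
      exact zmod_one_ne_zero hn5 (by linear_combination -h2)

lemma fs_conn (hn5 : 5 ≤ n) : (flowerSnark n).Connected := by
  haveI : NeZero n := ⟨by omega⟩
  rw [connected_iff]
  refine ⟨?_, ⟨(0, 0)⟩⟩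
  have ha : ∀ m : ℕ, (flowerSnark n).Reachable (0, (0 : ZMod n)) (0, (m : ZMod n)) := by
    intro m
    induction m with
    | zero => exact (by simp : ((0:ℕ):ZMod n) = 0) ▸ Reachable.refl _
    | succ m ih =>
        have h := (adj_aa hn5 (m : ZMod n)).reachable
        push_cast
        exact ih.trans h
  have key : ∀ v : Fin 4 × ZMod n, (flowerSnark n).Reachable (0, (0 : ZMod n)) v := by
    rintro ⟨t, j⟩
    have hj : ((j.val : ℕ) : ZMod n) = j := ZMod.natCast_zmod_val j
    have h0 : (flowerSnark n).Reachable (0, (0 : ZMod n)) (0, j) := hj ▸ ha j.val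
    have hb : (flowerSnark n).Reachable (0, (0 : ZMod n)) (1, j) :=
      h0.trans (adj_b 0 (by simp) j).symm.reachable
    fin_cases t
    · exact h0
    · exact hb
    · exact hb.trans (adj_b 2 (by simp) j).reachable
    · exact hb.trans (adj_b 3 (by simp) j).reachable
  intro u v
  exact (key u).symm.trans (key v)

lemma penult {V : Type*} {G : SimpleGraph V} (hc : G.Connected) {s v : V} {m : ℕ}
    (h : G.dist s v = m + 1) : ∃ u, G.Adj v u ∧ G.dist s u = m := by
  obtain ⟨p, hp⟩ := (hc v s).exists_walk_length_eq_dist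
  rw [dist_comm, h] at hp
  cases p with
  | nil => simp at hp
  | @cons _ u _ hadj q =>
    refine ⟨u, hadj, ?_⟩
    have h1 : G.dist s u ≤ m := by
      have h2 := dist_le q.reverse
      simp only [Walk.length_reverse] at h2
      simp only [Walk.length_cons] at hp
      omega
    have h3 : G.dist s v ≤ G.dist s u + 1 := by
      calc G.dist s v ≤ G.dist s u + G.dist u v := hc.dist_triangle
        _ = G.dist s u + 1 := by rw [dist_eq_one_iff_adj.mpr hadj.symm]
    omega

lemma dSet_pair {V : Type*} (G : SimpleGraph V) (s x y : V) :
    dSet G s {x, y} = min (G.dist s x) (G.dist s y) := by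
  unfold dSet
  rw [Set.image_pair, csInf_pair]

lemma dSet_insert_pair {V : Type*} (G : SimpleGraph V) (s v x y : V) :
    dSet G s (insert v {x, y}) = min (G.dist s v) (dSet G s {x, y}) := by
  unfold dSet
  rw [Set.image_insert_eq, csInf_insert (OrderBot.bddBelow _) (by simp [Set.image_pair])]

lemma main (hn5 : 5 ≤ n) (t : Fin 4) (ht : t = 0 ∨ t = 2 ∨ t = 3) (i : ZMod n)
    (s : Fin 4 × ZMod n) :
    dSet (flowerSnark n) s (insert (t, i) {(1, i - 1), (1, i + 1)}) ≠
        dSet (flowerSnark n) s {(1, i - 1), (1, i + 1)} ↔ s = (t, i) ∨ s = (1, i) := by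
  have hc := fs_conn hn5
  rw [dSet_insert_pair, dSet_pair]
  set G := flowerSnark n with hG
  have ht1 : t ≠ 1 := by rcases ht with rfl|rfl|rfl <;> decide
  have hiff : ∀ a M : ℕ, (min a M ≠ M ↔ a < M) := by intro a M; omega
  rw [hiff]
  constructor
  · intro hlt
    by_contra hs
    push_neg at hs
    obtain ⟨hs1, hs2⟩ := hs
    have hM1 : min (G.dist s (1, i-1)) (G.dist s (1, i+1)) ≤ G.dist s (1, i-1) :=
      min_le_left _ _
    have hM2 : min (G.dist s (1, i-1)) (G.dist s (1, i+1)) ≤ G.dist s (1, i+1) :=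
      min_le_right _ _
    have ha0 : 0 < G.dist s (t, i) := hc.pos_dist_of_ne hs1
    obtain ⟨m, hm⟩ : ∃ m, G.dist s (t, i) = m + 1 := ⟨G.dist s (t, i) - 1, by omega⟩
    obtain ⟨u, hu, hdu⟩ := penult hc hm
    rcases nb t ht1 i u hu.symm with rfl | hadj | hadj
    · -- u = (1, i)
      have hm0 : 0 < m := by
        rcases Nat.eq_zero_or_pos m with h0 | h0
        · exact absurd ((hc.dist_eq_zero_iff).mp (h0 ▸ hdu)) hs2
        · exact h0
      obtain ⟨m', hm'⟩ : ∃ m', m = m' + 1 := ⟨m - 1, by omega⟩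
      obtain ⟨u', hu', hdu'⟩ := penult hc (show G.dist s (1, i) = m' + 1 by rw [hdu, hm'])
      obtain ⟨t'', ht'', rfl⟩ := nb_b i u' hu'.symm
      obtain ⟨w, hw1, hw2⟩ := nb2 t'' ht'' i hn5
      have h5 : G.dist s (1, i + 1) ≤ m' + 2 := by
        calc G.dist s (1, i+1) ≤ G.dist s w + G.dist w (1, i+1) := hc.dist_triangle
          _ = G.dist s w + 1 := by rw [dist_eq_one_iff_adj.mpr hw2]
          _ ≤ (G.dist s (t'', i) + G.dist (t'', i) w) + 1 := by
              have := hc.dist_triangle (u := s) (v := (t'', i)) (w := w)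
              omega
          _ ≤ (m' + 1) + 1 := by
              rw [hdu', dist_eq_one_iff_adj.mpr hw1]
      omega
    · have h5 : G.dist s (1, i - 1) ≤ m + 1 := by
        calc G.dist s (1, i-1) ≤ G.dist s u + G.dist u (1, i-1) := hc.dist_triangle
          _ = G.dist s u + 1 := by rw [dist_eq_one_iff_adj.mpr hadj]
          _ = m + 1 := by rw [hdu]
      omega
    · have h5 : G.dist s (1, i + 1) ≤ m + 1 := by
        calc G.dist s (1, i+1) ≤ G.dist s u + G.dist u (1, i+1) := hc.dist_triangle
          _ = G.dist s u + 1 := by rw [dist_eq_one_iff_adj.mpr hadj]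
          _ = m + 1 := by rw [hdu]
      omega
  · rintro (rfl | rfl)
    · have ha0 : G.dist (t, i) (t, i) = 0 := dist_self
      have h1 : 0 < G.dist (t, i) (1, i - 1) :=
        hc.pos_dist_of_ne (fun h => ht1 (congrArg Prod.fst h))
      have h2 : 0 < G.dist (t, i) (1, i + 1) :=
        hc.pos_dist_of_ne (fun h => ht1 (congrArg Prod.fst h))
      omega
    · have ha1 : G.dist (1, i) (t, i) = 1 := dist_eq_one_iff_adj.mpr (adj_b t ht i)
      have hne1 : ((1, i) : Fin 4 × ZMod n) ≠ (1, i - 1) := by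
        intro h
        have h2 : i = i - 1 := congrArg Prod.snd h
        exact zmod_one_ne_zero hn5 (by linear_combination h2)
      have hne2 : ((1, i) : Fin 4 × ZMod n) ≠ (1, i + 1) := by
        intro h
        have h2 : i = i + 1 := congrArg Prod.snd h
        exact zmod_one_ne_zero hn5 (by linear_combination -h2)
      have h1 : G.dist (1, i) (1, i - 1) ≠ 0 := (hc.pos_dist_of_ne hne1).ne'
      have h2 : G.dist (1, i) (1, i + 1) ≠ 0 := (hc.pos_dist_of_ne hne2).ne'
      have h3 : G.dist (1, i) (1, i - 1) ≠ 1 :=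
        fun h => not_adj_bb i (i - 1) (dist_eq_one_iff_adj.mp h)
      have h4 : G.dist (1, i) (1, i + 1) ≠ 1 :=
        fun h => not_adj_bb i (i + 1) (dist_eq_one_iff_adj.mp h)
      omega

end FSaux

theorem stmt_17 {n k : ℕ} (hn : n = 2 * k + 1) (hn5 : 5 ≤ n) (i : ZMod n) :
    ∀ s : Fin 4 × ZMod n,
      (dSet (flowerSnark n) s (insert (0, i) {(1, i - 1), (1, i + 1)}) ≠
          dSet (flowerSnark n) s {(1, i - 1), (1, i + 1)} ↔
        s = (0, i) ∨ s = (1, i)) ∧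
      (dSet (flowerSnark n) s (insert (2, i) {(1, i - 1), (1, i + 1)}) ≠
          dSet (flowerSnark n) s {(1, i - 1), (1, i + 1)} ↔
        s = (2, i) ∨ s = (1, i)) ∧
      (dSet (flowerSnark n) s (insert (3, i) {(1, i - 1), (1, i + 1)}) ≠
          dSet (flowerSnark n) s {(1, i - 1), (1, i + 1)} ↔
        s = (3, i) ∨ s = (1, i)) := by
  intro s
  exact ⟨FSaux.main hn5 0 (Or.inl rfl) i s, FSaux.main hn5 2 (Or.inr (Or.inl rfl)) i s,
    FSaux.main hn5 3 (Or.inr (Or.inr rfl)) i s⟩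
end

section
/- Let n = 2k+1 ≥ 5 be odd. The {3}-metric dimension of the flower snark J_n equals 3n, and the set V(J_n) \ {b_1,…,b_n} is a {3}-metric basis. -/
open SimpleGraph

variable {V : Type*}

namespace FlowerAux

variable {n : ℕ}

lemma one_ne_zero' (hn5 : 5 ≤ n) : (1 : ZMod n) ≠ 0 := by
  intro h
  rw [show (1 : ZMod n) = ((1 : ℕ) : ZMod n) by push_cast; ring,
    ZMod.natCast_eq_zero_iff] at h
  have := Nat.le_of_dvd one_pos h
  omega

lemma two_ne_zero' (hn5 : 5 ≤ n) : (2 : ZMod n) ≠ 0 := by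
  intro h
  rw [show (2 : ZMod n) = ((2 : ℕ) : ZMod n) by push_cast; ring,
    ZMod.natCast_eq_zero_iff] at h
  have := Nat.le_of_dvd two_pos h
  omega

lemma succ_ne (hn5 : 5 ≤ n) (i : ZMod n) : i + 1 ≠ i := by
  intro h
  exact one_ne_zero' hn5 (by linear_combination h - i)

lemma neg_one_ne_zero' (hn5 : 5 ≤ n) : (-1 : ZMod n) ≠ 0 := by
  intro h
  exact one_ne_zero' hn5 (by linear_combination -h)

lemma fin4cases : ∀ t : Fin 4, t ≠ 1 → t = 0 ∨ t = 2 ∨ t = 3 := by decide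

lemma adj_iff' {x y : Fin 4 × ZMod n} :
    (flowerSnark n).Adj x y ↔ x ≠ y ∧ (FlowerRel n x y ∨ FlowerRel n y x) :=
  SimpleGraph.fromRel_adj _ _ _

lemma adj_b {t : Fin 4} (ht : t ≠ 1) (i : ZMod n) :
    (flowerSnark n).Adj (t, i) (1, i) := by
  rw [adj_iff']
  refine ⟨fun h => ht (congrArg Prod.fst h), Or.inr (Or.inl ⟨rfl, ?_, rfl⟩)⟩
  exact fin4cases t ht

lemma rel_col {x y : Fin 4 × ZMod n} (h : FlowerRel n x y) :
    x.2 = y.2 ∨ y.2 = x.2 + 1 := by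
  rcases h with ⟨_, _, h⟩ | ⟨_, _, h⟩ | ⟨_, _, _, h⟩ | ⟨_, _, _, h⟩ | ⟨_, _, h1, h2⟩ | ⟨_, _, h1, h2⟩
  · exact Or.inl h
  · exact Or.inr h
  · exact Or.inr h
  · exact Or.inr h
  · exact Or.inr (by rw [h1, h2]; ring)
  · exact Or.inr (by rw [h1, h2]; ring)

lemma adj_col {x y : Fin 4 × ZMod n} (h : (flowerSnark n).Adj x y) :
    x.2 = y.2 ∨ y.2 = x.2 + 1 ∨ x.2 = y.2 + 1 := by
  rcases (adj_iff'.1 h).2 with hr | hr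
  · rcases rel_col hr with h1 | h1
    · exact Or.inl h1
    · exact Or.inr (Or.inl h1)
  · rcases rel_col hr with h1 | h1
    · exact Or.inl h1.symm
    · exact Or.inr (Or.inr h1)

lemma nbhd (hn5 : 5 ≤ n) {t : Fin 4} (ht : t ≠ 1) {i : ZMod n} {x : Fin 4 × ZMod n}
    (h : (flowerSnark n).Adj x (t, i)) :
    x = (1, i) ∨
    (t = 0 ∧ (x = (0, i + 1) ∨ x = (0, i - 1))) ∨
    (t = 2 ∧ ((i ≠ -1 ∧ x = (2, i + 1)) ∨ (i ≠ 0 ∧ x = (2, i - 1)) ∨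
      (i = -1 ∧ x = (3, 0)) ∨ (i = 0 ∧ x = (3, -1)))) ∨
    (t = 3 ∧ ((i ≠ -1 ∧ x = (3, i + 1)) ∨ (i ≠ 0 ∧ x = (3, i - 1)) ∨
      (i = -1 ∧ x = (2, 0)) ∨ (i = 0 ∧ x = (2, -1)))) := by
  have hxeta : x = (x.1, x.2) := rfl
  rcases (adj_iff'.1 h).2 with hr | hr
  · rcases hr with ⟨h1, _, h3⟩ | ⟨h1, h2, h3⟩ | ⟨h1, h2, h4, h3⟩ | ⟨h1, h2, h4, h3⟩ |
      ⟨h1, h2, h4, h3⟩ | ⟨h1, h2, h4, h3⟩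
    · exact Or.inl (by rw [hxeta, h1, h3])
    · refine Or.inr (Or.inl ⟨h2, Or.inr ?_⟩)
      rw [hxeta, h1]
      exact Prod.ext_iff.2 ⟨rfl, by dsimp only; linear_combination -h3⟩
    · refine Or.inr (Or.inr (Or.inl ⟨h2, Or.inr (Or.inl ⟨?_, ?_⟩)⟩))
      · intro h0; apply h4; dsimp only at h3; linear_combination h0 - h3
      · rw [hxeta, h1]
        exact Prod.ext_iff.2 ⟨rfl, by dsimp only; linear_combination -h3⟩
    · refine Or.inr (Or.inr (Or.inr ⟨h2, Or.inr (Or.inl ⟨?_, ?_⟩)⟩))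
      · intro h0; apply h4; dsimp only at h3; linear_combination h0 - h3
      · rw [hxeta, h1]
        exact Prod.ext_iff.2 ⟨rfl, by dsimp only; linear_combination -h3⟩
    · refine Or.inr (Or.inr (Or.inr ⟨h2, Or.inr (Or.inr (Or.inr ⟨h3, ?_⟩))⟩))
      rw [hxeta, h1, h4]
    · refine Or.inr (Or.inr (Or.inl ⟨h2, Or.inr (Or.inr (Or.inr ⟨h3, ?_⟩))⟩))
      rw [hxeta, h1, h4]
  · rcases hr with ⟨h1, _, h3⟩ | ⟨h1, h2, h3⟩ | ⟨h1, h2, h4, h3⟩ | ⟨h1, h2, h4, h3⟩ |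
      ⟨h1, h2, h4, h3⟩ | ⟨h1, h2, h4, h3⟩
    · exact absurd h1 ht
    · exact Or.inr (Or.inl ⟨h1, Or.inl (by rw [hxeta, h2, h3])⟩)
    · exact Or.inr (Or.inr (Or.inl ⟨h1, Or.inl ⟨h4, by rw [hxeta, h2, h3]⟩⟩))
    · exact Or.inr (Or.inr (Or.inr ⟨h1, Or.inl ⟨h4, by rw [hxeta, h2, h3]⟩⟩))
    · exact Or.inr (Or.inr (Or.inl ⟨h1, Or.inr (Or.inr (Or.inl ⟨h4, by rw [hxeta, h2, h3]⟩))⟩))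
    · exact Or.inr (Or.inr (Or.inr ⟨h1, Or.inr (Or.inr (Or.inl ⟨h4, by rw [hxeta, h2, h3]⟩))⟩))

lemma not_adj_same_col (hn5 : 5 ≤ n) {x y : Fin 4 × ZMod n} (hcol : x.2 = y.2)
    (hx1 : x.1 ≠ 1) (hy1 : y.1 ≠ 1) : ¬ (flowerSnark n).Adj x y := by
  intro h
  have h' : (flowerSnark n).Adj x (y.1, y.2) := h
  rcases nbhd hn5 hy1 h' with h1 | ⟨_, h1 | h1⟩ |
      ⟨_, ⟨_, h1⟩ | ⟨_, h1⟩ | ⟨hi, h1⟩ | ⟨hi, h1⟩⟩ |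
      ⟨_, ⟨_, h1⟩ | ⟨_, h1⟩ | ⟨hi, h1⟩ | ⟨hi, h1⟩⟩
  all_goals have h2 := congrArg Prod.snd h1
  all_goals dsimp only at h2
  · exact hx1 (congrArg Prod.fst h1)
  · exact one_ne_zero' hn5 (by linear_combination hcol - h2)
  · exact one_ne_zero' hn5 (by linear_combination h2 - hcol)
  · exact one_ne_zero' hn5 (by linear_combination hcol - h2)
  · exact one_ne_zero' hn5 (by linear_combination h2 - hcol)
  · exact one_ne_zero' hn5 (by linear_combination hi + hcol - h2)
  · exact one_ne_zero' hn5 (by linear_combination h2 - hcol - hi)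
  · exact one_ne_zero' hn5 (by linear_combination hcol - h2)
  · exact one_ne_zero' hn5 (by linear_combination h2 - hcol)
  · exact one_ne_zero' hn5 (by linear_combination hi + hcol - h2)
  · exact one_ne_zero' hn5 (by linear_combination h2 - hcol - hi)

lemma adj_to_b {x : Fin 4 × ZMod n} {j : ZMod n} (h : (flowerSnark n).Adj x (1, j)) :
    x.2 = j := by
  rcases (adj_iff'.1 h).2 with hr | hr
  · rcases hr with ⟨_, _, h3⟩ | ⟨_, h2, _⟩ | ⟨_, h2, _, _⟩ | ⟨_, h2, _, _⟩ |
      ⟨_, h2, _, _⟩ | ⟨_, h2, _, _⟩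
    · exact h3
    all_goals exact absurd h2 (by simp)
  · rcases hr with ⟨_, _, h3⟩ | ⟨h2, _, _⟩ | ⟨h2, _, _, _⟩ | ⟨h2, _, _, _⟩ |
      ⟨h2, _, _, _⟩ | ⟨h2, _, _, _⟩
    · exact h3.symm
    all_goals exact absurd h2 (by simp)

lemma plus_form (hn5 : 5 ≤ n) {t : Fin 4} (ht : t ≠ 1) {i : ZMod n} {x : Fin 4 × ZMod n}
    (h : (flowerSnark n).Adj x (t, i)) (hx2 : x.2 = i + 1) :
    (t = 0 ∧ x.1 = 0) ∨ (t = 2 ∧ ((i ≠ -1 ∧ x.1 = 2) ∨ (i = -1 ∧ x.1 = 3))) ∨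
      (t = 3 ∧ ((i ≠ -1 ∧ x.1 = 3) ∨ (i = -1 ∧ x.1 = 2))) := by
  rcases nbhd hn5 ht h with h1 | ⟨ht0, h1 | h1⟩ |
      ⟨ht0, ⟨hi, h1⟩ | ⟨hi, h1⟩ | ⟨hi, h1⟩ | ⟨hi, h1⟩⟩ |
      ⟨ht0, ⟨hi, h1⟩ | ⟨hi, h1⟩ | ⟨hi, h1⟩ | ⟨hi, h1⟩⟩
  all_goals have h2 := congrArg Prod.snd h1
  all_goals have hf := congrArg Prod.fst h1
  all_goals dsimp only at h2 hf
  · exact absurd (by linear_combination h2 - hx2) (one_ne_zero' hn5)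
  · exact Or.inl ⟨ht0, hf⟩
  · exact absurd (by linear_combination h2 - hx2) (two_ne_zero' hn5)
  · exact Or.inr (Or.inl ⟨ht0, Or.inl ⟨hi, hf⟩⟩)
  · exact absurd (by linear_combination h2 - hx2) (two_ne_zero' hn5)
  · exact Or.inr (Or.inl ⟨ht0, Or.inr ⟨hi, hf⟩⟩)
  · exact absurd (by linear_combination h2 - hx2 - hi) (two_ne_zero' hn5)
  · exact Or.inr (Or.inr ⟨ht0, Or.inl ⟨hi, hf⟩⟩)
  · exact absurd (by linear_combination h2 - hx2) (two_ne_zero' hn5)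
  · exact Or.inr (Or.inr ⟨ht0, Or.inr ⟨hi, hf⟩⟩)
  · exact absurd (by linear_combination h2 - hx2 - hi) (two_ne_zero' hn5)

lemma minus_form (hn5 : 5 ≤ n) {t : Fin 4} (ht : t ≠ 1) {i : ZMod n} {x : Fin 4 × ZMod n}
    (h : (flowerSnark n).Adj x (t, i)) (hx2 : x.2 = i - 1) :
    (t = 0 ∧ x.1 = 0) ∨ (t = 2 ∧ ((i ≠ 0 ∧ x.1 = 2) ∨ (i = 0 ∧ x.1 = 3))) ∨
      (t = 3 ∧ ((i ≠ 0 ∧ x.1 = 3) ∨ (i = 0 ∧ x.1 = 2))) := by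
  rcases nbhd hn5 ht h with h1 | ⟨ht0, h1 | h1⟩ |
      ⟨ht0, ⟨hi, h1⟩ | ⟨hi, h1⟩ | ⟨hi, h1⟩ | ⟨hi, h1⟩⟩ |
      ⟨ht0, ⟨hi, h1⟩ | ⟨hi, h1⟩ | ⟨hi, h1⟩ | ⟨hi, h1⟩⟩
  all_goals have h2 := congrArg Prod.snd h1
  all_goals have hf := congrArg Prod.fst h1
  all_goals dsimp only at h2 hf
  · exact absurd (by linear_combination hx2 - h2) (one_ne_zero' hn5)
  · exact absurd (by linear_combination hx2 - h2) (two_ne_zero' hn5)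
  · exact Or.inl ⟨ht0, hf⟩
  · exact absurd (by linear_combination hx2 - h2) (two_ne_zero' hn5)
  · exact Or.inr (Or.inl ⟨ht0, Or.inl ⟨hi, hf⟩⟩)
  · exact absurd (by linear_combination hx2 - h2 + hi) (two_ne_zero' hn5)
  · exact Or.inr (Or.inl ⟨ht0, Or.inr ⟨hi, hf⟩⟩)
  · exact absurd (by linear_combination hx2 - h2) (two_ne_zero' hn5)
  · exact Or.inr (Or.inr ⟨ht0, Or.inl ⟨hi, hf⟩⟩)
  · exact absurd (by linear_combination hx2 - h2 + hi) (two_ne_zero' hn5)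
  · exact Or.inr (Or.inr ⟨ht0, Or.inr ⟨hi, hf⟩⟩)

lemma common_nbr (hn5 : 5 ≤ n) {t t' : Fin 4} (ht : t ≠ 1) (ht' : t' ≠ 1) (htt' : t ≠ t')
    {i : ZMod n} {x : Fin 4 × ZMod n}
    (h1 : x = (t, i) ∨ (flowerSnark n).Adj x (t, i))
    (h2 : x = (t', i) ∨ (flowerSnark n).Adj x (t', i)) : x = (1, i) := by
  rcases h1 with h1 | h1
  · rcases h2 with h2 | h2
    · exact absurd (congrArg Prod.fst (h1.symm.trans h2)) htt'
    · rw [h1] at h2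
      exact absurd h2 (not_adj_same_col hn5 rfl ht ht')
  · rcases h2 with h2 | h2
    · rw [h2] at h1
      exact absurd h1 (not_adj_same_col hn5 rfl ht' ht)
    · -- x adjacent to both (t,i) and (t',i)
      rcases adj_col h1 with hc | hc | hc
      · -- x.2 = i
        by_cases hx1 : x.1 = 1
        · exact Prod.ext_iff.2 ⟨hx1, hc⟩
        · exact absurd h1 (not_adj_same_col hn5 hc hx1 ht)
      · -- i = x.2 + 1, so x.2 = i - 1
        dsimp only at hc
        have hx2 : x.2 = i - 1 := by linear_combination -hc
        rcases minus_form hn5 ht h1 hx2 with ⟨ha, hb⟩ | ⟨ha, hb⟩ | ⟨ha, hb⟩ <;>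
          rcases minus_form hn5 ht' h2 hx2 with ⟨ha', hb'⟩ | ⟨ha', hb'⟩ | ⟨ha', hb'⟩
        · exact absurd (ha.trans ha'.symm) htt'
        · rcases hb' with ⟨_, hb'⟩ | ⟨_, hb'⟩ <;>
            exact absurd (hb.symm.trans hb') (by decide)
        · rcases hb' with ⟨_, hb'⟩ | ⟨_, hb'⟩ <;>
            exact absurd (hb.symm.trans hb') (by decide)
        · rcases hb with ⟨_, hb⟩ | ⟨_, hb⟩ <;>
            exact absurd (hb.symm.trans hb') (by decide)
        · exact absurd (ha.trans ha'.symm) htt'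
        · rcases hb with ⟨hi, hb⟩ | ⟨hi, hb⟩ <;> rcases hb' with ⟨hi', hb'⟩ | ⟨hi', hb'⟩
          · exact absurd (hb.symm.trans hb') (by decide)
          · exact absurd hi' hi
          · exact absurd hi hi'
          · exact absurd (hb.symm.trans hb') (by decide)
        · rcases hb with ⟨_, hb⟩ | ⟨_, hb⟩ <;>
            exact absurd (hb.symm.trans hb') (by decide)
        · rcases hb with ⟨hi, hb⟩ | ⟨hi, hb⟩ <;> rcases hb' with ⟨hi', hb'⟩ | ⟨hi', hb'⟩
          · exact absurd (hb.symm.trans hb') (by decide)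
          · exact absurd hi' hi
          · exact absurd hi hi'
          · exact absurd (hb.symm.trans hb') (by decide)
        · exact absurd (ha.trans ha'.symm) htt'
      · -- x.2 = i + 1
        dsimp only at hc
        rcases plus_form hn5 ht h1 hc with ⟨ha, hb⟩ | ⟨ha, hb⟩ | ⟨ha, hb⟩ <;>
          rcases plus_form hn5 ht' h2 hc with ⟨ha', hb'⟩ | ⟨ha', hb'⟩ | ⟨ha', hb'⟩
        · exact absurd (ha.trans ha'.symm) htt'
        · rcases hb' with ⟨_, hb'⟩ | ⟨_, hb'⟩ <;>
            exact absurd (hb.symm.trans hb') (by decide)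
        · rcases hb' with ⟨_, hb'⟩ | ⟨_, hb'⟩ <;>
            exact absurd (hb.symm.trans hb') (by decide)
        · rcases hb with ⟨_, hb⟩ | ⟨_, hb⟩ <;>
            exact absurd (hb.symm.trans hb') (by decide)
        · exact absurd (ha.trans ha'.symm) htt'
        · rcases hb with ⟨hi, hb⟩ | ⟨hi, hb⟩ <;> rcases hb' with ⟨hi', hb'⟩ | ⟨hi', hb'⟩
          · exact absurd (hb.symm.trans hb') (by decide)
          · exact absurd hi' hi
          · exact absurd hi hi'
          · exact absurd (hb.symm.trans hb') (by decide)
        · rcases hb with ⟨_, hb⟩ | ⟨_, hb⟩ <;>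
            exact absurd (hb.symm.trans hb') (by decide)
        · rcases hb with ⟨hi, hb⟩ | ⟨hi, hb⟩ <;> rcases hb' with ⟨hi', hb'⟩ | ⟨hi', hb'⟩
          · exact absurd (hb.symm.trans hb') (by decide)
          · exact absurd hi' hi
          · exact absurd hi hi'
          · exact absurd (hb.symm.trans hb') (by decide)
        · exact absurd (ha.trans ha'.symm) htt'

lemma f0ne1 : (0 : Fin 4) ≠ 1 := by decide
lemma f2ne1 : (2 : Fin 4) ≠ 1 := by decide
lemma f3ne1 : (3 : Fin 4) ≠ 1 := by decide

lemma b_of_nbr {t : Fin 4} (ht : t ≠ 1) {i : ZMod n} {x : Fin 4 × ZMod n}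
    (hx1 : x.1 = 1) (h : x = (t, i) ∨ (flowerSnark n).Adj x (t, i)) : x = (1, i) := by
  rcases h with h | h
  · exact absurd ((congrArg Prod.fst h).symm.trans hx1) ht
  · have h2 : (flowerSnark n).Adj (t, i) (1, x.2) := by
      rw [show ((1 : Fin 4), x.2) = x from (Prod.ext_iff.2 ⟨hx1.symm, rfl⟩)]
      exact h.symm
    exact Prod.ext_iff.2 ⟨hx1, (adj_to_b h2).symm⟩

lemma nbr_plus (hn5 : 5 ≤ n) {t : Fin 4} (ht : t ≠ 1) (i : ZMod n) :
    ∃ z : Fin 4 × ZMod n, (flowerSnark n).Adj (t, i) z ∧ z.2 = i + 1 ∧ z.1 ≠ 1 := by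
  have hne : ∀ (a b : Fin 4) (u v : ZMod n), u ≠ v → (a, u) ≠ (b, v) := by
    intro a b u v huv h; exact huv (congrArg Prod.snd h)
  have hii : i ≠ i + 1 := fun h => (succ_ne hn5 i h.symm).elim
  rcases fin4cases t ht with rfl | rfl | rfl
  · exact ⟨(0, i + 1), adj_iff'.2 ⟨hne _ _ _ _ hii, Or.inl (Or.inr (Or.inl ⟨rfl, rfl, rfl⟩))⟩,
      rfl, f0ne1⟩
  · by_cases hi : i = (-1 : ZMod n)
    · subst hi
      exact ⟨(3, 0), adj_iff'.2 ⟨by simp, Or.inl (Or.inr (Or.inr (Or.inr (Or.inr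
        (Or.inl ⟨rfl, rfl, rfl, rfl⟩)))))⟩, by dsimp only; ring, f3ne1⟩
    · exact ⟨(2, i + 1), adj_iff'.2 ⟨hne _ _ _ _ hii,
        Or.inl (Or.inr (Or.inr (Or.inl ⟨rfl, rfl, hi, rfl⟩)))⟩, rfl, f2ne1⟩
  · by_cases hi : i = (-1 : ZMod n)
    · subst hi
      exact ⟨(2, 0), adj_iff'.2 ⟨by simp, Or.inl (Or.inr (Or.inr (Or.inr (Or.inr
        (Or.inr ⟨rfl, rfl, rfl, rfl⟩)))))⟩, by dsimp only; ring, f2ne1⟩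
    · exact ⟨(3, i + 1), adj_iff'.2 ⟨hne _ _ _ _ hii,
        Or.inl (Or.inr (Or.inr (Or.inr (Or.inl ⟨rfl, rfl, hi, rfl⟩))))⟩, rfl, f3ne1⟩

lemma nbr_minus (hn5 : 5 ≤ n) {t : Fin 4} (ht : t ≠ 1) (i : ZMod n) :
    ∃ z : Fin 4 × ZMod n, (flowerSnark n).Adj (t, i) z ∧ z.2 = i - 1 ∧ z.1 ≠ 1 := by
  have hne : ∀ (a b : Fin 4) (u v : ZMod n), u ≠ v → (a, u) ≠ (b, v) := by
    intro a b u v huv h; exact huv (congrArg Prod.snd h)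
  have hii : i ≠ i - 1 := by
    intro h; exact one_ne_zero' hn5 (by linear_combination h)
  have hmm : i - 1 + 1 = i := by ring
  rcases fin4cases t ht with rfl | rfl | rfl
  · exact ⟨(0, i - 1), adj_iff'.2 ⟨hne _ _ _ _ hii, Or.inr (Or.inr (Or.inl ⟨rfl, rfl, hmm.symm⟩))⟩,
      rfl, f0ne1⟩
  · by_cases hi : i = (0 : ZMod n)
    · subst hi
      refine ⟨(3, -1), adj_iff'.2 ⟨by simp, Or.inr (Or.inr (Or.inr (Or.inr (Or.inr
        (Or.inr ⟨rfl, rfl, rfl, rfl⟩)))))⟩, by dsimp only; ring, f3ne1⟩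
    · have hi1 : i - 1 ≠ -1 := by
        intro h; exact hi (by linear_combination h)
      exact ⟨(2, i - 1), adj_iff'.2 ⟨hne _ _ _ _ hii,
        Or.inr (Or.inr (Or.inr (Or.inl ⟨rfl, rfl, hi1, hmm.symm⟩)))⟩, rfl, f2ne1⟩
  · by_cases hi : i = (0 : ZMod n)
    · subst hi
      refine ⟨(2, -1), adj_iff'.2 ⟨by simp, Or.inr (Or.inr (Or.inr (Or.inr (Or.inr (Or.inl
        ⟨rfl, rfl, rfl, rfl⟩)))))⟩, by dsimp only; ring, f2ne1⟩
    · have hi1 : i - 1 ≠ -1 := by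
        intro h; exact hi (by linear_combination h)
      exact ⟨(3, i - 1), adj_iff'.2 ⟨hne _ _ _ _ hii,
        Or.inr (Or.inr (Or.inr (Or.inr (Or.inl ⟨rfl, rfl, hi1, hmm.symm⟩))))⟩, rfl, f3ne1⟩

lemma adj_symm' {x y : Fin 4 × ZMod n} (h : (flowerSnark n).Adj x y) :
    (flowerSnark n).Adj y x := h.symm

lemma connected (hn5 : 5 ≤ n) : (flowerSnark n).Connected := by
  haveI : NeZero n := ⟨by omega⟩
  have hstep : ∀ m : ℕ, (flowerSnark n).Reachable ((0 : Fin 4), ((m : ℕ) : ZMod n)) (0, 0) := by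
    intro m
    induction m with
    | zero => rw [Nat.cast_zero]
    | succ m ih =>
      refine Reachable.trans ?_ ih
      have hadj : (flowerSnark n).Adj (0, ((m : ℕ) : ZMod n)) (0, (((m + 1 : ℕ)) : ZMod n)) := by
        refine adj_iff'.2 ⟨?_, Or.inl (Or.inr (Or.inl ⟨rfl, rfl, by push_cast; ring⟩))⟩
        intro h
        have h2 := congrArg Prod.snd h
        dsimp only at h2
        refine succ_ne hn5 ((m : ℕ) : ZMod n) ?_
        push_cast at h2
        linear_combination -h2
      exact hadj.symm.reachable
  have hcol : ∀ v : Fin 4 × ZMod n, (flowerSnark n).Reachable v (0, v.2) := by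
    intro v
    by_cases h1 : v.1 = 1
    · have : (flowerSnark n).Adj ((0 : Fin 4), v.2) (1, v.2) := adj_b f0ne1 v.2
      have hv : v = ((1 : Fin 4), v.2) := Prod.ext_iff.2 ⟨h1, rfl⟩
      rw [hv]
      exact (this.symm).reachable
    · by_cases h0 : v.1 = 0
      · rw [show v = ((0 : Fin 4), v.2) from Prod.ext_iff.2 ⟨h0, rfl⟩]
      · have ha : (flowerSnark n).Adj (v.1, v.2) (1, v.2) := adj_b h1 v.2
        have hb : (flowerSnark n).Adj ((0 : Fin 4), v.2) (1, v.2) := adj_b f0ne1 v.2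
        exact Reachable.trans ha.reachable hb.symm.reachable
  constructor
  intro u v
  have hu := hstep (u.2.val)
  rw [ZMod.natCast_rightInverse u.2] at hu
  have hv := hstep (v.2.val)
  rw [ZMod.natCast_rightInverse v.2] at hv
  exact (((hcol u).trans hu).trans hv.symm).trans (hcol v).symm

section DSet

variable {W : Type*} {G : SimpleGraph W} {s : W} {X Y : Set W}

lemma dSet_le_of_mem {x : W} (hx : x ∈ X) : dSet G s X ≤ G.dist s x :=
  Nat.sInf_le ⟨x, hx, rfl⟩

lemma exists_dSet (hX : X.Nonempty) : ∃ x ∈ X, dSet G s X = G.dist s x := by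
  have := Nat.sInf_mem (hX.image (G.dist s))
  obtain ⟨x, hx, hd⟩ := this
  exact ⟨x, hx, hd.symm⟩

lemma dSet_eq_zero_of_mem (hs : s ∈ X) : dSet G s X = 0 := by
  have h := dSet_le_of_mem (G := G) (s := s) hs
  rw [SimpleGraph.dist_self] at h
  omega

lemma dSet_ne_zero (hc : G.Connected) (hX : X.Nonempty) (hs : s ∉ X) : dSet G s X ≠ 0 := by
  obtain ⟨x, hx, hd⟩ := exists_dSet (s := s) (G := G) hX
  rw [hd]
  have : s ≠ x := fun h => hs (h ▸ hx)
  exact Nat.pos_iff_ne_zero.mp (hc.pos_dist_of_ne this)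

lemma le_dSet (hX : X.Nonempty) {c : ℕ} (h : ∀ x ∈ X, c ≤ G.dist s x) : c ≤ dSet G s X := by
  obtain ⟨x, hx, hd⟩ := exists_dSet (s := s) (G := G) hX
  rw [hd]; exact h x hx

lemma dSet_le_dSet (hY : Y.Nonempty) (h : ∀ y ∈ Y, dSet G s X ≤ G.dist s y) :
    dSet G s X ≤ dSet G s Y := by
  obtain ⟨y, hy, hd⟩ := exists_dSet (s := s) (G := G) hY
  rw [hd]; exact h y hy

end DSet

lemma dist_le_one_to_b (hn5 : 5 ≤ n) (x : Fin 4 × ZMod n) :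
    (flowerSnark n).dist x (1, x.2) ≤ 1 := by
  by_cases h1 : x.1 = 1
  · rw [show x = ((1 : Fin 4), x.2) from Prod.ext_iff.2 ⟨h1, rfl⟩]
    simp [SimpleGraph.dist_self]
  · have h := adj_b h1 x.2
    have h' : (flowerSnark n).Adj x (1, x.2) := by
      rw [show x = (x.1, x.2) from rfl]; exact h
    exact le_of_eq (SimpleGraph.dist_eq_one_iff_adj.2 h')

/-- On any walk from `s` (outside column `i`) to a vertex of column `i`, there is a
vertex in column `i-1` or `i+1` strictly before the end; hence the corresponding
`b` vertex is within the walk's length. -/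
lemma walk_reach (hn5 : 5 ≤ n) {i : ZMod n} :
    ∀ {s t : Fin 4 × ZMod n} (p : (flowerSnark n).Walk s t), s.2 ≠ i → t.2 = i →
      ∃ j : ZMod n, (j = i + 1 ∨ j + 1 = i) ∧
        (flowerSnark n).dist s (1, j) ≤ p.length := by
  intro s t p
  induction p with
  | nil => intro hs ht; exact absurd ht hs
  | @cons u v w h q ih =>
    intro hs ht
    by_cases hv : v.2 = i
    · refine ⟨u.2, ?_, ?_⟩
      · rcases adj_col h with h1 | h1 | h1
        · exact absurd (h1.trans hv) hs
        · exact Or.inr (by rw [← h1, hv])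
        · exact Or.inl (by rw [h1, hv])
      · calc (flowerSnark n).dist u (1, u.2) ≤ 1 := dist_le_one_to_b hn5 u
          _ ≤ (SimpleGraph.Walk.cons h q).length := by
            rw [SimpleGraph.Walk.length_cons]; omega
    · obtain ⟨j, hj, hd⟩ := ih hv ht
      refine ⟨j, hj, ?_⟩
      calc (flowerSnark n).dist u (1, j)
          ≤ (flowerSnark n).dist u v + (flowerSnark n).dist v (1, j) :=
            (connected hn5).dist_triangle
        _ ≤ 1 + q.length := by
            have h1 : (flowerSnark n).dist u v = 1 := SimpleGraph.dist_eq_one_iff_adj.2 h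
            omega
        _ ≤ (SimpleGraph.Walk.cons h q).length := by
            rw [SimpleGraph.Walk.length_cons]; omega

lemma master (hn5 : 5 ≤ n) {i : ZMod n} {s t : Fin 4 × ZMod n}
    (hs : s.2 ≠ i) (ht : t.2 = i) :
    (flowerSnark n).dist s (1, i - 1) ≤ (flowerSnark n).dist s t ∨
    (flowerSnark n).dist s (1, i + 1) ≤ (flowerSnark n).dist s t := by
  obtain ⟨p, hp⟩ := (connected hn5).exists_walk_length_eq_dist s t
  obtain ⟨j, hj | hj, hd⟩ := walk_reach hn5 p hs ht
  · exact Or.inr (by rw [← hj]; omega)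
  · have : j = i - 1 := by linear_combination hj
    exact Or.inl (by rw [← this]; omega)

lemma dist_b_ge_two (hn5 : 5 ≤ n) {x : Fin 4 × ZMod n} {j : ZMod n} (hx : x.2 ≠ j) :
    2 ≤ (flowerSnark n).dist x (1, j) := by
  have hne : x ≠ (1, j) := fun h => hx (congrArg Prod.snd h)
  have h0 : (flowerSnark n).dist x (1, j) ≠ 0 :=
    Nat.pos_iff_ne_zero.mp ((connected hn5).pos_dist_of_ne hne)
  have h1 : (flowerSnark n).dist x (1, j) ≠ 1 := by
    intro h
    exact hx (adj_to_b (SimpleGraph.dist_eq_one_iff_adj.1 h))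
  omega

lemma dist_b_le_two_plus (hn5 : 5 ≤ n) {t : Fin 4} (ht : t ≠ 1) (i : ZMod n) :
    (flowerSnark n).dist (t, i) (1, i + 1) ≤ 2 := by
  obtain ⟨z, hadj, hz2, hz1⟩ := nbr_plus hn5 ht i
  have h2 : (flowerSnark n).Adj z (1, i + 1) := by
    have := adj_b hz1 z.2
    rw [show z = (z.1, z.2) from rfl, hz2] at this ⊢
    exact this
  calc (flowerSnark n).dist (t, i) (1, i + 1)
      ≤ (flowerSnark n).dist (t, i) z + (flowerSnark n).dist z (1, i + 1) :=
        (connected hn5).dist_triangle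
    _ ≤ 2 := by
        have e1 : (flowerSnark n).dist (t, i) z = 1 := SimpleGraph.dist_eq_one_iff_adj.2 hadj
        have e2 : (flowerSnark n).dist z (1, i + 1) = 1 := SimpleGraph.dist_eq_one_iff_adj.2 h2
        omega

lemma dist_b_le_two_minus (hn5 : 5 ≤ n) {t : Fin 4} (ht : t ≠ 1) (i : ZMod n) :
    (flowerSnark n).dist (t, i) (1, i - 1) ≤ 2 := by
  obtain ⟨z, hadj, hz2, hz1⟩ := nbr_minus hn5 ht i
  have h2 : (flowerSnark n).Adj z (1, i - 1) := by
    have := adj_b hz1 z.2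
    rw [show z = (z.1, z.2) from rfl, hz2] at this ⊢
    exact this
  calc (flowerSnark n).dist (t, i) (1, i - 1)
      ≤ (flowerSnark n).dist (t, i) z + (flowerSnark n).dist z (1, i - 1) :=
        (connected hn5).dist_triangle
    _ ≤ 2 := by
        have e1 : (flowerSnark n).dist (t, i) z = 1 := SimpleGraph.dist_eq_one_iff_adj.2 hadj
        have e2 : (flowerSnark n).dist z (1, i - 1) = 1 := SimpleGraph.dist_eq_one_iff_adj.2 h2
        omega

/-- The masking pair for column `i`. -/
def Wmask (n : ℕ) (i : ZMod n) : Set (Fin 4 × ZMod n) :=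
  {((1 : Fin 4), i - 1), ((1 : Fin 4), i + 1)}

/-- The test set for `t` in column `i`. -/
def Mset (n : ℕ) (i : ZMod n) (t : Fin 4) : Set (Fin 4 × ZMod n) :=
  if t = 1 then Wmask n i else insert (t, i) (Wmask n i)

lemma sub_one_ne (hn5 : 5 ≤ n) (i : ZMod n) : i - 1 ≠ i := by
  intro h; exact one_ne_zero' hn5 (by linear_combination -h)

lemma add_one_ne (hn5 : 5 ≤ n) (i : ZMod n) : i + 1 ≠ i := succ_ne hn5 i

lemma notMem_W (hn5 : 5 ≤ n) (i : ZMod n) (t : Fin 4) : (t, i) ∉ Wmask n i := by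
  intro h
  rcases h with h | h
  · exact sub_one_ne hn5 i (congrArg Prod.snd h).symm
  · exact add_one_ne hn5 i (congrArg Prod.snd h).symm

lemma W_subset_M (i : ZMod n) (t : Fin 4) : Wmask n i ⊆ Mset n i t := by
  unfold Mset
  split
  · exact fun _ h => h
  · exact fun x h => Set.mem_insert_of_mem _ h

lemma W_nonempty (i : ZMod n) : (Wmask n i).Nonempty := ⟨_, Or.inl rfl⟩

lemma M_ncard_le (hn5 : 5 ≤ n) (i : ZMod n) (t : Fin 4) : (Mset n i t).ncard ≤ 3 := by
  have hW : (Wmask n i).ncard = 2 := by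
    refine Set.ncard_pair ?_
    intro h
    have := congrArg Prod.snd h
    dsimp only at this
    exact two_ne_zero' hn5 (by linear_combination -this)
  unfold Mset
  split
  · omega
  · have := Set.ncard_insert_le (t, i) (Wmask n i)
    omega

/-- Key lemma: outside the two tested vertices, `dSet` does not depend on `t`. -/
lemma dSet_M_le (hn5 : 5 ≤ n) {i : ZMod n} {t t' : Fin 4} {s : Fin 4 × ZMod n}
    (hs1 : s ≠ (t, i)) (hs2 : s ≠ (t', i)) :
    dSet (flowerSnark n) s (Mset n i t) ≤ dSet (flowerSnark n) s (Mset n i t') := by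
  have hWne := W_nonempty (n := n) i
  have hMne : (Mset n i t').Nonempty := hWne.mono (W_subset_M i t')
  refine dSet_le_dSet hMne ?_
  intro y hy
  have hWany : ∀ w ∈ Wmask n i, dSet (flowerSnark n) s (Mset n i t) ≤ (flowerSnark n).dist s w :=
    fun w h => dSet_le_of_mem (W_subset_M i t h)
  unfold Mset at hy
  by_cases ht' : t' = 1
  · rw [if_pos ht'] at hy
    exact hWany y hy
  · rw [if_neg ht'] at hy
    rcases hy with rfl | hy
    swap
    · exact hWany y hy
    -- y = (t', i)
    by_cases hcol : s.2 = i
    · -- s in column i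
      by_cases hb : s.1 = 1
      · -- s = (1, i)
        have hsb : s = ((1 : Fin 4), i) := Prod.ext_iff.2 ⟨hb, hcol⟩
        have ht : t ≠ 1 := by
          intro h; rw [h] at hs1; exact hs1 (hsb.trans rfl)
        have hmem : (t, i) ∈ Mset n i t := by
          unfold Mset; rw [if_neg ht]; exact Set.mem_insert _ _
        have hd1 : (flowerSnark n).dist s (t, i) = 1 := by
          rw [hsb, SimpleGraph.dist_comm]
          exact SimpleGraph.dist_eq_one_iff_adj.2 (adj_b ht i)
        have hd2 : (flowerSnark n).dist s (t', i) = 1 := by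
          rw [hsb, SimpleGraph.dist_comm]
          exact SimpleGraph.dist_eq_one_iff_adj.2 (adj_b ht' i)
        calc dSet (flowerSnark n) s (Mset n i t) ≤ 1 := hd1 ▸ dSet_le_of_mem hmem
          _ ≤ (flowerSnark n).dist s (t', i) := by omega
      · -- s non-b in column i : dist to (t',i) ≥ 2, dSet ≤ 2 via (1, i+1)
        have hge : 2 ≤ (flowerSnark n).dist s (t', i) := by
          have hne : s ≠ (t', i) := hs2
          have h0 : (flowerSnark n).dist s (t', i) ≠ 0 :=
            Nat.pos_iff_ne_zero.mp ((connected hn5).pos_dist_of_ne hne)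
          have h1 : (flowerSnark n).dist s (t', i) ≠ 1 := by
            intro h
            exact not_adj_same_col hn5 (by rw [hcol]) hb ht'
              (SimpleGraph.dist_eq_one_iff_adj.1 h)
          omega
        have hle : (flowerSnark n).dist s ((1 : Fin 4), i + 1) ≤ 2 := by
          have := dist_b_le_two_plus hn5 hb i
          rw [show ((s.1 : Fin 4), i) = s from Prod.ext_iff.2 ⟨rfl, hcol.symm⟩] at this
          exact this
        calc dSet (flowerSnark n) s (Mset n i t) ≤ 2 :=
              le_trans (hWany _ (Or.inr rfl)) hle
          _ ≤ _ := hge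
    · -- s outside column i : use master
      rcases master hn5 hcol (rfl : ((t' : Fin 4), i).2 = i) with hm | hm
      · exact le_trans (hWany _ (Or.inl rfl)) hm
      · exact le_trans (hWany _ (Or.inr rfl)) hm

lemma dSet_M_eq (hn5 : 5 ≤ n) {i : ZMod n} {t t' : Fin 4} {s : Fin 4 × ZMod n}
    (hs1 : s ≠ (t, i)) (hs2 : s ≠ (t', i)) :
    dSet (flowerSnark n) s (Mset n i t) = dSet (flowerSnark n) s (Mset n i t') :=
  le_antisymm (dSet_M_le hn5 hs1 hs2) (dSet_M_le hn5 hs2 hs1)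

lemma M_ne (hn5 : 5 ≤ n) {i : ZMod n} {t t' : Fin 4} (h : t ≠ t') :
    Mset n i t ≠ Mset n i t' := by
  have key : ∀ (a b : Fin 4), a ≠ b → b ≠ 1 → Mset n i a ≠ Mset n i b := by
    intro a b hab hb1 heq
    have hmem : (b, i) ∈ Mset n i a := by
      rw [heq]; unfold Mset; rw [if_neg hb1]; exact Set.mem_insert _ _
    unfold Mset at hmem
    split at hmem
    · exact notMem_W hn5 i b hmem
    · rcases hmem with hmem | hmem
      · exact hab (congrArg Prod.fst hmem).symm
      · exact notMem_W hn5 i b hmem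
  by_cases hb1 : t' = 1
  · by_cases ha1 : t = 1
    · exact absurd (ha1.trans hb1.symm) h
    · intro heq
      exact key t' t (Ne.symm h) ha1 heq.symm
  · exact key t t' h hb1

/-- No `{3}`-resolving set misses two vertices of the same column. -/
lemma col_pair (hn5 : 5 ≤ n) {S : Set (Fin 4 × ZMod n)}
    (hres : LResolving (flowerSnark n) S 3) {i : ZMod n} {t1 t2 : Fin 4}
    (h12 : t1 ≠ t2) (h1 : (t1, i) ∉ S) (h2 : (t2, i) ∉ S) : False := by
  have hWne := W_nonempty (n := n) i
  obtain ⟨s, hsS, hsne⟩ := hres (Mset n i t1) (Mset n i t2)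
    (hWne.mono (W_subset_M i t1)) (hWne.mono (W_subset_M i t2))
    (M_ncard_le hn5 i t1) (M_ncard_le hn5 i t2) (M_ne hn5 h12)
  have hs1 : s ≠ (t1, i) := fun h => h1 (h ▸ hsS)
  have hs2 : s ≠ (t2, i) := fun h => h2 (h ▸ hsS)
  exact hsne (dSet_M_eq hn5 hs1 hs2)

/-- Lower bound: every `{3}`-resolving set has at least `3n` elements. -/
lemma lower_bound (hn5 : 5 ≤ n) {S : Set (Fin 4 × ZMod n)}
    (hres : LResolving (flowerSnark n) S 3) : 3 * n ≤ S.ncard := by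
  haveI : NeZero n := ⟨by omega⟩
  have hinj : Set.InjOn Prod.snd Sᶜ := by
    intro x hx y hy hxy
    by_contra hne
    have hfst : x.1 ≠ y.1 := by
      intro h
      exact hne (Prod.ext_iff.2 ⟨h, hxy⟩)
    exact col_pair hn5 hres hfst
      (by simpa using hx) (by rw [show (y.1, x.2) = y from Prod.ext_iff.2 ⟨rfl, hxy⟩]; simpa using hy)
  have hcard : (Sᶜ).ncard ≤ n := by
    have := Set.ncard_le_ncard_of_injOn Prod.snd (fun a _ => Set.mem_univ a.2) hinj
      (Set.finite_univ (α := ZMod n))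
    rwa [Set.ncard_univ, Nat.card_eq_fintype_card, ZMod.card] at this
  have htot := Set.ncard_add_ncard_compl S
  rw [Nat.card_eq_fintype_card, Fintype.card_prod, Fintype.card_fin, ZMod.card] at htot
  omega

lemma helperB (hn5 : 5 ≤ n) {X Y : Set (Fin 4 × ZMod n)} (hXne : X.Nonempty)
    (hX3 : X.ncard ≤ 3) (hY3 : Y.ncard ≤ 3) {i : ZMod n}
    (hw : ((1 : Fin 4), i) ∈ Y) (hwX : ((1 : Fin 4), i) ∉ X)
    (hdiff : ∀ z ∈ X, z ∉ Y → z.1 = (1 : Fin 4)) :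
    ∃ s : Fin 4 × ZMod n, s.1 ≠ 1 ∧
      dSet (flowerSnark n) s X ≠ dSet (flowerSnark n) s Y := by
  haveI : NeZero n := ⟨by omega⟩
  by_cases hex : ∃ t : Fin 4, t ≠ 1 ∧ ∀ x ∈ X, x ≠ (t, i) ∧ ¬ (flowerSnark n).Adj x (t, i)
  · obtain ⟨t, ht1, hX2⟩ := hex
    refine ⟨(t, i), ht1, ?_⟩
    have hge : 2 ≤ dSet (flowerSnark n) (t, i) X := by
      refine le_dSet hXne ?_
      intro x hx
      obtain ⟨hne, hnadj⟩ := hX2 x hx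
      have h0 : (flowerSnark n).dist (t, i) x ≠ 0 :=
        Nat.pos_iff_ne_zero.mp ((connected hn5).pos_dist_of_ne (fun h => hne h.symm))
      have h1 : (flowerSnark n).dist (t, i) x ≠ 1 := by
        intro h
        exact hnadj (SimpleGraph.dist_eq_one_iff_adj.1 h).symm
      omega
    have hle : dSet (flowerSnark n) (t, i) Y ≤ 1 := by
      have := dSet_le_of_mem (G := flowerSnark n) (s := (t, i)) hw
      rwa [SimpleGraph.dist_eq_one_iff_adj.2 (adj_b ht1 i)] at this
    omega
  · exfalso
    push_neg at hex
    have hP : ∀ t : Fin 4, t ≠ 1 → ∃ x ∈ X, x = (t, i) ∨ (flowerSnark n).Adj x (t, i) := by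
      intro t ht
      obtain ⟨x, hx, hprop⟩ := hex t ht
      by_cases hxe : x = (t, i)
      · exact ⟨x, hx, Or.inl hxe⟩
      · exact ⟨x, hx, Or.inr (hprop hxe)⟩
    obtain ⟨x0, hx0X, hx0⟩ := hP 0 (by decide)
    obtain ⟨x2, hx2X, hx2⟩ := hP 2 (by decide)
    obtain ⟨x3, hx3X, hx3⟩ := hP 3 (by decide)
    have hb1 : x0.1 ≠ 1 := fun h => hwX (b_of_nbr (by decide) h hx0 ▸ hx0X)
    have hb2 : x2.1 ≠ 1 := fun h => hwX (b_of_nbr (by decide) h hx2 ▸ hx2X)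
    have hb3 : x3.1 ≠ 1 := fun h => hwX (b_of_nbr (by decide) h hx3 ▸ hx3X)
    have hd02 : x0 ≠ x2 := by
      intro h
      exact hwX (common_nbr hn5 (by decide) (by decide) (by decide) hx0 (h ▸ hx2) ▸ hx0X)
    have hd03 : x0 ≠ x3 := by
      intro h
      exact hwX (common_nbr hn5 (by decide) (by decide) (by decide) hx0 (h ▸ hx3) ▸ hx0X)
    have hd23 : x2 ≠ x3 := by
      intro h
      exact hwX (common_nbr hn5 (by decide) (by decide) (by decide) hx2 (h ▸ hx3) ▸ hx2X)
    have hsub : ({x0, x2, x3} : Set (Fin 4 × ZMod n)) ⊆ X := by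
      intro z hz
      rcases hz with rfl | rfl | rfl
      · exact hx0X
      · exact hx2X
      · exact hx3X
    have hcard3 : ({x0, x2, x3} : Set (Fin 4 × ZMod n)).ncard = 3 := by
      rw [Set.ncard_insert_of_notMem (by simp [hd02, hd03]) (Set.toFinite _),
        Set.ncard_pair hd23]
    have hXeq : ({x0, x2, x3} : Set (Fin 4 × ZMod n)) = X :=
      Set.eq_of_subset_of_ncard_le hsub (by omega) (Set.toFinite _)
    have hXY : X ⊆ Y := by
      intro z hz
      by_contra hzY
      have h1 := hdiff z hz hzY
      rw [← hXeq] at hz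
      rcases hz with rfl | rfl | rfl
      · exact hb1 h1
      · exact hb2 h1
      · exact hb3 h1
    have hYsub : insert ((1 : Fin 4), i) X ⊆ Y := by
      intro z hz
      rcases hz with rfl | hz
      · exact hw
      · exact hXY hz
    have hY4 : 4 ≤ Y.ncard := by
      have h4 : (insert ((1 : Fin 4), i) X).ncard = 4 := by
        rw [Set.ncard_insert_of_notMem hwX (Set.toFinite _), ← hXeq, hcard3]
      have := Set.ncard_le_ncard hYsub (Set.toFinite _)
      omega
    omega

lemma basis_resolving (hn5 : 5 ≤ n) :
    LResolving (flowerSnark n) {x : Fin 4 × ZMod n | x.1 ≠ 1} 3 := by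
  intro X Y hXne hYne hX3 hY3 hne
  by_cases hd : ∃ z : Fin 4 × ZMod n, ((z ∈ X ∧ z ∉ Y) ∨ (z ∈ Y ∧ z ∉ X)) ∧ z.1 ≠ 1
  · obtain ⟨z, hz, hz1⟩ := hd
    rcases hz with ⟨hzX, hzY⟩ | ⟨hzY, hzX⟩
    · refine ⟨z, hz1, ?_⟩
      rw [dSet_eq_zero_of_mem hzX]
      exact (dSet_ne_zero (connected hn5) hYne hzY).symm
    · refine ⟨z, hz1, ?_⟩
      rw [dSet_eq_zero_of_mem hzY]
      exact dSet_ne_zero (connected hn5) hXne hzX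
  · push_neg at hd
    have hwit : ∃ w : Fin 4 × ZMod n, (w ∈ X ∧ w ∉ Y) ∨ (w ∈ Y ∧ w ∉ X) := by
      by_contra hcon
      push_neg at hcon
      refine hne (Set.ext fun z => ⟨fun hz => (hcon z).1 hz, fun hz => (hcon z).2 hz⟩)
    obtain ⟨w, hcase⟩ := hwit
    rcases hcase with ⟨hwX, hwY⟩ | ⟨hwY, hwX⟩
    · have hw1 : w.1 = 1 := hd w (Or.inl ⟨hwX, hwY⟩)
      have hweq : w = ((1 : Fin 4), w.2) := Prod.ext_iff.2 ⟨hw1, rfl⟩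
      obtain ⟨s, hs1, hsne⟩ := helperB hn5 hYne hY3 hX3 (hweq ▸ hwX) (hweq ▸ hwY)
        (fun z hzY hzX => hd z (Or.inr ⟨hzY, hzX⟩))
      exact ⟨s, hs1, hsne.symm⟩
    · have hw1 : w.1 = 1 := hd w (Or.inr ⟨hwY, hwX⟩)
      have hweq : w = ((1 : Fin 4), w.2) := Prod.ext_iff.2 ⟨hw1, rfl⟩
      obtain ⟨s, hs1, hsne⟩ := helperB hn5 hXne hX3 hY3 (hweq ▸ hwY) (hweq ▸ hwX)
        (fun z hzX hzY => hd z (Or.inl ⟨hzX, hzY⟩))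
      exact ⟨s, hs1, hsne⟩

lemma card_basis (hn5 : 5 ≤ n) : {x : Fin 4 × ZMod n | x.1 ≠ 1}.ncard = 3 * n := by
  haveI : NeZero n := ⟨by omega⟩
  rw [← Nat.card_coe_set_eq]
  have e : {x : Fin 4 × ZMod n | x.1 ≠ 1} ≃ ({t : Fin 4 // t ≠ 1} × ZMod n) :=
    { toFun := fun x => (⟨x.1.1, x.2⟩, x.1.2)
      invFun := fun p => ⟨(p.1.1, p.2), p.1.2⟩
      left_inv := fun x => rfl
      right_inv := fun p => rfl }
  rw [Nat.card_congr e, Nat.card_prod, Nat.card_zmod]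
  have h1 : Nat.card {t : Fin 4 // t ≠ 1} = 3 := by
    rw [Nat.card_eq_fintype_card]
    decide
  rw [h1]

end FlowerAux

theorem stmt_18 {n k : ℕ} (hn : n = 2 * k + 1) (hn5 : 5 ≤ n) :
    lDim (flowerSnark n) 3 = 3 * n ∧
      LResolving (flowerSnark n) {x : Fin 4 × ZMod n | x.1 ≠ 1} 3 ∧
      {x : Fin 4 × ZMod n | x.1 ≠ 1}.ncard = 3 * n := by
  have hb := FlowerAux.basis_resolving (n := n) hn5
  have hc := FlowerAux.card_basis (n := n) hn5
  refine ⟨?_, hb, hc⟩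
  apply le_antisymm
  · exact Nat.sInf_le ⟨_, hb, hc⟩
  · refine le_csInf ⟨3 * n, _, hb, hc⟩ ?_
    rintro m ⟨S, hS, rfl⟩
    exact FlowerAux.lower_bound hn5 hS
end
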